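/- arXiv:1202.4010 — 7 statements merged into one kernel-verified Lean document; each statement's English description precedes it below -/
import Mathlib

section
/- For every quantum channel Φ from 2×2 complex matrices to 4×4 complex matrices (given by Kraus operators A_i with Σ_i A_i*A_i = I, acting as Φ(ρ) = Σ_i A_i ρ A_i*), the average cloning success probability (1/4) Σ_{k=1}^{4} ⟨ψ_k ⊗ ψ_k| Φ(|ψ_k⟩⟨ψ_k|) |ψ_k ⊗ ψ_k⟩ over the four BB84 states is at most 3/4. -/
/-!
Each Kraus operator `B` contributes at most `3/2 ‖B‖²_F` to the summed success probability.
The amplitudes for `|0⟩` and `|1⟩` are the single entries `B (0,0) 0` and `B (1,1) 1`, while those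
for `|±⟩` are `2^{-3/2} (E ± O)`, where `E` and `O` sum the entries `B (a,b) t` with `a + b + t`
even, resp. odd. The parallelogram law turns the last two into `(|E|² + |O|²) / 4`, and a weighted
Cauchy–Schwarz inequality bounds `|B (0,0) 0|² + |E|² / 4` and `|B (1,1) 1|² + |O|² / 4` by
`3/2` times the squared entries involved. Summing over the Kraus operators gives
`3/2 · ∑ ‖A i‖²_F = 3/2 · tr (∑ (A i)ᴴ A i) = 3`.
-/

open Matrix

/-- The four BB84 states in ℂ². -/
noncomputable def bb84 : Fin 4 → (Fin 2 → ℂ)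
  | 0 => ![1, 0]
  | 1 => ![0, 1]
  | 2 => ![(Real.sqrt 2 : ℂ)⁻¹, (Real.sqrt 2 : ℂ)⁻¹]
  | 3 => ![(Real.sqrt 2 : ℂ)⁻¹, -(Real.sqrt 2 : ℂ)⁻¹]

/-- Tensor product of two qubit vectors, as a vector on `Fin 2 × Fin 2`. -/
def tens (u v : Fin 2 → ℂ) : Fin 2 × Fin 2 → ℂ := fun p => u p.1 * v p.2

theorem Matrix.trace_conjTranspose_mul_self_eq_sum_normSq {m n : Type*} [Fintype m] [Fintype n]
    (A : Matrix m n ℂ) : (Aᴴ * A).trace = ∑ p, ∑ t, (Complex.normSq (A p t) : ℂ) := by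
  simp only [trace, diag, mul_apply, conjTranspose_apply, Complex.star_def,
    Complex.normSq_eq_conj_mul_self]
  exact Finset.sum_comm

theorem Matrix.sum_sum_sum_normSq_eq_card_of_sum_conjTranspose_mul_self_eq_one
    {ι m n : Type*} [Fintype ι] [Fintype m] [Fintype n] [DecidableEq n]
    (A : ι → Matrix m n ℂ) (hA : ∑ i, (A i)ᴴ * A i = 1) :
    ∑ i, ∑ p, ∑ t, Complex.normSq (A i p t) = Fintype.card n := by
  have h_trace := congrArg trace hA
  rw [trace_sum, trace_one] at h_trace
  simp only [trace_conjTranspose_mul_self_eq_sum_normSq] at h_trace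
  exact_mod_cast h_trace

theorem Complex.normSq_add_add_normSq_sub (u v : ℂ) :
    normSq (u + v) + normSq (u - v) = 2 * normSq u + 2 * normSq v := by
  simp only [normSq_apply, add_re, add_im, sub_re, sub_im]
  ring

-- Cauchy–Schwarz with weights `1/2, 1/6, 1/6, 1/6`.
theorem Complex.normSq_add_add_add_le (a b c d : ℂ) :
    normSq (a + b + c + d) ≤ 2 * normSq a + 6 * (normSq b + normSq c + normSq d) := by
  simp only [normSq_apply, add_re, add_im]
  nlinarith [sq_nonneg (a.re - b.re - c.re - d.re), sq_nonneg (a.im - b.im - c.im - d.im),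
    sq_nonneg (b.re - c.re), sq_nonneg (c.re - d.re), sq_nonneg (b.re - d.re),
    sq_nonneg (b.im - c.im), sq_nonneg (c.im - d.im), sq_nonneg (b.im - d.im)]

theorem sum_normSq_bb84_clone_amplitude_le (B : Matrix (Fin 2 × Fin 2) (Fin 2) ℂ) :
    ∑ k : Fin 4, Complex.normSq (star (tens (bb84 k) (bb84 k)) ⬝ᵥ B *ᵥ bb84 k)
      ≤ 3 / 2 * ∑ p, ∑ t, Complex.normSq (B p t) := by
  set r : ℂ := (Real.sqrt 2 : ℂ)⁻¹ with hr
  set even := B (0, 0) 0 + B (0, 1) 1 + B (1, 0) 1 + B (1, 1) 0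
  set odd := B (1, 1) 1 + B (0, 0) 1 + B (0, 1) 0 + B (1, 0) 0
  have amp_zero : star (tens (bb84 0) (bb84 0)) ⬝ᵥ B *ᵥ bb84 0 = B (0, 0) 0 := by
    simp [bb84, tens, dotProduct, mulVec, Fintype.sum_prod_type]
  have amp_one : star (tens (bb84 1) (bb84 1)) ⬝ᵥ B *ᵥ bb84 1 = B (1, 1) 1 := by
    simp [bb84, tens, dotProduct, mulVec, Fintype.sum_prod_type]
  have amp_plus : star (tens (bb84 2) (bb84 2)) ⬝ᵥ B *ᵥ bb84 2 = r ^ 3 * (even + odd) := by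
    simp only [dotProduct, mulVec, bb84, tens, Pi.star_apply, star_mul', RCLike.star_def,
      Fintype.sum_prod_type, Fin.sum_univ_two, cons_val_zero, cons_val_one, map_inv₀,
      Complex.conj_ofReal, even, odd]
    ring
  have amp_minus : star (tens (bb84 3) (bb84 3)) ⬝ᵥ B *ᵥ bb84 3 = r ^ 3 * (even - odd) := by
    simp only [dotProduct, mulVec, bb84, tens, Pi.star_apply, star_mul', RCLike.star_def,
      Fintype.sum_prod_type, Fin.sum_univ_two, cons_val_zero, cons_val_one, map_inv₀, map_neg,
      Complex.conj_ofReal, even, odd]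
    ring
  have normSq_r_cube : Complex.normSq (r ^ 3) = 1 / 8 := by
    rw [map_pow, hr, map_inv₀, Complex.normSq_ofReal, Real.mul_self_sqrt zero_le_two]
    norm_num
  have h_even := Complex.normSq_add_add_add_le (B (0, 0) 0) (B (0, 1) 1) (B (1, 0) 1) (B (1, 1) 0)
  have h_odd := Complex.normSq_add_add_add_le (B (1, 1) 1) (B (0, 0) 1) (B (0, 1) 0) (B (1, 0) 0)
  have h_par := Complex.normSq_add_add_normSq_sub even odd
  rw [Fin.sum_univ_four, amp_zero, amp_one, amp_plus, amp_minus, Complex.normSq_mul,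
    Complex.normSq_mul, normSq_r_cube]
  simp only [Fintype.sum_prod_type, Fin.sum_univ_two]
  linarith

/-- For every quantum channel from qubits to two qubits (given by Kraus operators
`A i` with `∑ i, (A i)ᴴ * A i = 1`), the average cloning success probability over the
four BB84 states, namely `(1/4) ∑ k ⟨ψ_k ⊗ ψ_k| Φ(|ψ_k⟩⟨ψ_k|) |ψ_k ⊗ ψ_k⟩
= (1/4) ∑ k ∑ i |⟨ψ_k ⊗ ψ_k| A i |ψ_k⟩|²`, is at most `3/4`. -/
theorem wiesner_single_qubit_counterfeit_bound {ι : Type} [Fintype ι]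
    (A : ι → Matrix (Fin 2 × Fin 2) (Fin 2) ℂ)
    (hA : ∑ i, (A i)ᴴ * A i = 1) :
    (1 / 4 : ℝ) * ∑ k : Fin 4, ∑ i,
        Complex.normSq (star (tens (bb84 k) (bb84 k)) ⬝ᵥ (A i).mulVec (bb84 k))
      ≤ 3 / 4 := by
  calc (1 / 4 : ℝ) * ∑ k : Fin 4, ∑ i,
        Complex.normSq (star (tens (bb84 k) (bb84 k)) ⬝ᵥ (A i).mulVec (bb84 k))
      = 1 / 4 * ∑ i, ∑ k : Fin 4,
        Complex.normSq (star (tens (bb84 k) (bb84 k)) ⬝ᵥ (A i).mulVec (bb84 k)) := by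
        rw [Finset.sum_comm]
    _ ≤ 1 / 4 * ∑ i, 3 / 2 * ∑ p, ∑ t, Complex.normSq (A i p t) := by
        gcongr with i
        exact sum_normSq_bb84_clone_amplitude_le (A i)
    _ = 3 / 4 := by
        rw [← Finset.mul_sum, sum_sum_sum_normSq_eq_card_of_sum_conjTranspose_mul_self_eq_one A hA,
          Fintype.card_fin]
        norm_num
end

section
/- Fix n ≥ 1. For k ∈ {1,2,3,4}^n let |Ψ_k⟩ = |ψ_{k_1}⟩ ⊗ ⋯ ⊗ |ψ_{k_n}⟩ ∈ (ℂ²)^{⊗n} be the tensor product of BB84 states. For every quantum channel Φ from 2^n × 2^n complex matrices to 4^n × 4^n complex matrices (given by Kraus operators A_i with Σ_i A_i*A_i = I), the average cloning success probability 4^{−n} Σ_{k ∈ {1,2,3,4}^n} ⟨Ψ_k ⊗ Ψ_k| Φ(|Ψ_k⟩⟨Ψ_k|) |Ψ_k ⊗ Ψ_k⟩ is at most (3/4)^n. -/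
/-!
The BB84 states are real, so the cloning amplitude `⟨Ψ_k ⊗ Ψ_k| A |Ψ_k⟩` is the inner product of
the vectorization of `A` with `Ψ_k ⊗ Ψ_k ⊗ Ψ_k`. On a single qubit the four vectors
`ψ_j ⊗ ψ_j ⊗ ψ_j` extend, by eight further vectors, to a tight frame of `ℂ⁸` with frame constant
`3/2`; its `n`-th Kronecker power is a tight frame with constant `(3/2)^n` containing every
`Ψ_k ⊗ Ψ_k ⊗ Ψ_k`. Bessel's inequality bounds `∑ k |⟨Ψ_k ⊗ Ψ_k| A_i |Ψ_k⟩|²` by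
`(3/2)^n ‖A_i‖²_F`, and `∑ i ‖A_i‖²_F = tr (∑ i A_iᴴ A_i) = 2^n`; dividing by `4^n` gives `(3/4)^n`.
-/

open Matrix

/-- For a key `k : Fin n → Fin 4`, the product BB84 state
`|Ψ_k⟩ = |ψ_{k 1}⟩ ⊗ ⋯ ⊗ |ψ_{k n}⟩` in `(ℂ²)^{⊗n}`,
the latter identified with functions `(Fin n → Fin 2) → ℂ`. -/
noncomputable def bb84Prod (n : ℕ) (k : Fin n → Fin 4) : (Fin n → Fin 2) → ℂ :=
  fun x => ∏ i, bb84 (k i) (x i)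

/-- Tensor product of two `n`-qubit vectors. -/
def tensN (n : ℕ) (u v : (Fin n → Fin 2) → ℂ) :
    (Fin n → Fin 2) × (Fin n → Fin 2) → ℂ := fun p => u p.1 * v p.2

open ComplexConjugate

namespace Matrix

variable {κ α β R : Type*} [CommSemiring R]

def kroneckerPow (V : Matrix κ α R) (n : ℕ) : Matrix (Fin n → κ) (Fin n → α) R :=
  of fun f x => ∏ i, V (f i) (x i)

@[simp]
theorem kroneckerPow_apply (V : Matrix κ α R) (n : ℕ) (f : Fin n → κ) (x : Fin n → α) :
    kroneckerPow V n f x = ∏ i, V (f i) (x i) := rfl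

theorem kroneckerPow_mul [Fintype α] (V : Matrix κ α R) (W : Matrix α β R) (n : ℕ) :
    kroneckerPow V n * kroneckerPow W n = kroneckerPow (V * W) n := by
  ext f g
  simp only [mul_apply, kroneckerPow_apply, ← Finset.prod_mul_distrib]
  exact (Fintype.prod_sum fun i a => V (f i) a * W a (g i)).symm

theorem kroneckerPow_one [DecidableEq α] (n : ℕ) :
    kroneckerPow (1 : Matrix α α R) n = 1 := by
  ext f g
  simp only [kroneckerPow_apply, one_apply, Finset.prod_boole, Finset.mem_univ, true_implies,
    funext_iff]

theorem kroneckerPow_smul (c : R) (V : Matrix κ α R) (n : ℕ) :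
    kroneckerPow (c • V) n = c ^ n • kroneckerPow V n := by
  ext f x
  simp [Finset.prod_mul_distrib]

theorem conjTranspose_kroneckerPow [StarRing R] (V : Matrix κ α R) (n : ℕ) :
    (kroneckerPow V n)ᴴ = kroneckerPow Vᴴ n := by
  ext x f
  simp [star_prod]

theorem conjTranspose_mul_self_kroneckerPow [StarRing R] [Fintype κ] [DecidableEq α]
    {V : Matrix κ α R} {c : R} (hV : Vᴴ * V = c • 1) (n : ℕ) :
    (kroneckerPow V n)ᴴ * kroneckerPow V n = c ^ n • 1 := by
  rw [conjTranspose_kroneckerPow, kroneckerPow_mul, hV, kroneckerPow_smul, kroneckerPow_one]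

end Matrix

theorem Complex.ofReal_sum_normSq {α : Type*} [Fintype α] (v : α → ℂ) :
    ((∑ a, Complex.normSq (v a) : ℝ) : ℂ) = star v ⬝ᵥ v := by
  simp [dotProduct, Complex.normSq_eq_conj_mul_self]

theorem Matrix.sum_normSq_mulVec_of_conjTranspose_mul_self {κ α : Type*} [Fintype κ] [Fintype α]
    [DecidableEq α] {V : Matrix κ α ℂ} {c : ℝ} (hV : Vᴴ * V = (c : ℂ) • 1)
    (x : α → ℂ) :
    ∑ j, Complex.normSq ((V *ᵥ x) j) = c * ∑ a, Complex.normSq (x a) := by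
  apply Complex.ofReal_injective
  rw [Complex.ofReal_mul, Complex.ofReal_sum_normSq, Complex.ofReal_sum_normSq, star_mulVec,
    ← dotProduct_mulVec, mulVec_mulVec, hV, smul_mulVec, one_mulVec, dotProduct_smul, smul_eq_mul]

theorem Matrix.sum_normSq_mulVec_comp_le_of_conjTranspose_mul_self {K κ α : Type*} [Fintype K]
    [Fintype κ] [Fintype α] [DecidableEq α] {V : Matrix κ α ℂ} {c : ℝ}
    (hV : Vᴴ * V = (c : ℂ) • 1) (g : K ↪ κ) (x : α → ℂ) :
    ∑ k, Complex.normSq ((V *ᵥ x) (g k)) ≤ c * ∑ a, Complex.normSq (x a) := by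
  rw [← sum_normSq_mulVec_of_conjTranspose_mul_self hV,
    ← Finset.sum_map _ g fun j => Complex.normSq ((V *ᵥ x) j)]
  exact Finset.sum_le_univ_sum_of_nonneg fun _ => Complex.normSq_nonneg _

theorem Matrix.sum_sum_normSq_vec_of_sum_conjTranspose_mul_self {ι m k : Type*} [Fintype ι]
    [Fintype m] [Fintype k] [DecidableEq k] {A : ι → Matrix m k ℂ}
    (hA : ∑ i, (A i)ᴴ * A i = 1) :
    ∑ i, ∑ q, Complex.normSq (vec (A i) q) = Fintype.card k := by
  apply Complex.ofReal_injective
  rw [Complex.ofReal_sum]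
  simp only [Complex.ofReal_sum_normSq, star_vec_dotProduct_vec]
  rw [← trace_sum, hA, trace_one, Complex.ofReal_natCast]

def Equiv.arrowProdProdEquiv (ι α β γ : Type*) :
    (ι → α × β × γ) ≃ (ι → α) × (ι → β) × (ι → γ) :=
  (arrowProdEquivProdArrow _ _ _).trans (prodCongr (Equiv.refl _) (arrowProdEquivProdArrow _ _ _))

theorem star_tensN_dotProduct_mulVec (n : ℕ) (u v w : (Fin n → Fin 2) → ℂ)
    (M : Matrix ((Fin n → Fin 2) × (Fin n → Fin 2)) (Fin n → Fin 2) ℂ) :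
    star (tensN n u v) ⬝ᵥ M *ᵥ w =
      (fun q => w q.1 * star (u q.2.1) * star (v q.2.2)) ⬝ᵥ vec M := by
  simp only [dotProduct, mulVec, Finset.mul_sum]
  conv_rhs => rw [Fintype.sum_prod_type, Finset.sum_comm]
  refine Finset.sum_congr rfl fun p _ => Finset.sum_congr rfl fun x _ => ?_
  simp only [tensN, vec, Pi.star_apply, star_mul']
  ring

theorem conj_bb84 (j : Fin 4) (t : Fin 2) : conj (bb84 j t) = bb84 j t := by
  fin_cases j <;> fin_cases t <;> simp [bb84, Complex.conj_ofReal]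

/-- Entries are indexed `a b c`. The rank-one projectors onto these eight real vectors sum to
`(3/2) • 1 - ∑ j |ψ_j ⊗ ψ_j ⊗ ψ_j⟩⟨ψ_j ⊗ ψ_j ⊗ ψ_j|`, a sum-of-squares certificate for
`∑ j |ψ_j ⊗ ψ_j ⊗ ψ_j⟩⟨ψ_j ⊗ ψ_j ⊗ ψ_j| ≤ (3/2) • 1`. -/
noncomputable def bb84CloningCompletion : Fin 8 → Fin 2 → Fin 2 → Fin 2 → ℂ :=
  ![![![![(1:ℂ)/2, 0], ![0, -(1/2)]], ![![0, -(1/2)], ![-(1/2), 0]]],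
    ![![![(0:ℂ), 0], ![0, (√2 : ℂ)⁻¹]], ![![0, -(√2 : ℂ)⁻¹], ![0, 0]]],
    ![![![(0:ℂ), 0], ![0, (√2 : ℂ)⁻¹]], ![![0, 0], ![-(√2 : ℂ)⁻¹, 0]]],
    ![![![(0:ℂ), 0], ![0, 0]], ![![0, (√2 : ℂ)⁻¹], ![-(√2 : ℂ)⁻¹, 0]]],
    ![![![(0:ℂ), -(1/2)], ![-(1/2), 0]], ![![-(1/2), 0], ![0, 1/2]]],
    ![![![(0:ℂ), (√2 : ℂ)⁻¹], ![-(√2 : ℂ)⁻¹, 0]], ![![0, 0], ![0, 0]]],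
    ![![![(0:ℂ), (√2 : ℂ)⁻¹], ![0, 0]], ![![-(√2 : ℂ)⁻¹, 0], ![0, 0]]],
    ![![![(0:ℂ), 0], ![(√2 : ℂ)⁻¹, 0]], ![![-(√2 : ℂ)⁻¹, 0], ![0, 0]]]]

noncomputable def bb84CloningFrame : Matrix (Fin 4 ⊕ Fin 8) (Fin 2 × Fin 2 × Fin 2) ℂ :=
  of fun r q => Sum.elim (fun j => bb84 j q.1 * bb84 j q.2.1 * bb84 j q.2.2)
    (fun m => bb84CloningCompletion m q.1 q.2.1 q.2.2) r

set_option maxHeartbeats 1000000 in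
theorem conjTranspose_mul_self_bb84CloningFrame :
    bb84CloningFrameᴴ * bb84CloningFrame = ((3 / 2 : ℝ) : ℂ) • 1 := by
  have h2 : (√2 : ℂ) ^ 2 = 2 := by
    rw [← Complex.ofReal_pow, Real.sq_sqrt zero_le_two, Complex.ofReal_ofNat]
  have h6 : (√2 : ℂ) ^ 6 = 8 := by
    rw [show (√2 : ℂ) ^ 6 = ((√2 : ℂ) ^ 2) ^ 3 by ring, h2]; norm_num
  ext ⟨a, b, c⟩ ⟨a', b', c'⟩
  simp only [mul_apply, conjTranspose_apply, Fintype.sum_sum_type, Fin.sum_univ_succ,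
    Fin.sum_univ_zero, bb84CloningFrame, of_apply, Sum.elim_inl, Sum.elim_inr, Matrix.smul_apply,
    one_apply, Prod.mk.injEq]
  fin_cases a <;> fin_cases b <;> fin_cases c <;> fin_cases a' <;> fin_cases b' <;> fin_cases c' <;>
    simp [bb84, bb84CloningCompletion, Complex.conj_ofReal] <;> ring_nf <;> simp [h2, h6] <;>
      norm_num

theorem bb84_amplitude_eq_kroneckerPow_mulVec (n : ℕ) (k : Fin n → Fin 4)
    (M : Matrix ((Fin n → Fin 2) × (Fin n → Fin 2)) (Fin n → Fin 2) ℂ) :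
    star (tensN n (bb84Prod n k) (bb84Prod n k)) ⬝ᵥ M *ᵥ bb84Prod n k =
      (kroneckerPow bb84CloningFrame n *ᵥ (vec M ∘ Equiv.arrowProdProdEquiv _ _ _ _))
        (Sum.inl ∘ k) := by
  rw [star_tensN_dotProduct_mulVec, mulVec, dotProduct, dotProduct,
    ← (Equiv.arrowProdProdEquiv _ _ _ _).symm.sum_comp]
  refine Finset.sum_congr rfl fun q _ => ?_
  simp [conj_bb84, bb84CloningFrame, bb84Prod, Finset.prod_mul_distrib, Equiv.arrowProdProdEquiv]

theorem wiesner_counterfeit_bound_general (n : ℕ) {ι : Type} [Fintype ι]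
    (A : ι → Matrix ((Fin n → Fin 2) × (Fin n → Fin 2)) (Fin n → Fin 2) ℂ)
    (hA : ∑ i, (A i)ᴴ * A i = 1) :
    ((4 : ℝ) ^ n)⁻¹ * ∑ k : Fin n → Fin 4, ∑ i,
        Complex.normSq
          (star (tensN n (bb84Prod n k) (bb84Prod n k)) ⬝ᵥ (A i).mulVec (bb84Prod n k))
      ≤ (3 / 4 : ℝ) ^ n := by
  set F := kroneckerPow bb84CloningFrame n
  set e := Equiv.arrowProdProdEquiv (Fin n) (Fin 2) (Fin 2) (Fin 2)
  have hF : Fᴴ * F = (((3 / 2 : ℝ) ^ n : ℝ) : ℂ) • 1 := by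
    rw [conjTranspose_mul_self_kroneckerPow conjTranspose_mul_self_bb84CloningFrame,
      Complex.ofReal_pow]
  have bessel (i : ι) :
      ∑ k : Fin n → Fin 4, Complex.normSq ((F *ᵥ (vec (A i) ∘ e)) (Sum.inl ∘ k)) ≤
        (3 / 2 : ℝ) ^ n * ∑ q, Complex.normSq (vec (A i) q) := by
    rw [← e.sum_comp fun q => Complex.normSq (vec (A i) q)]
    exact sum_normSq_mulVec_comp_le_of_conjTranspose_mul_self hF
      Function.Embedding.inl.arrowCongrRight _
  calc _ ≤ ((4 : ℝ) ^ n)⁻¹ * ∑ i, (3 / 2 : ℝ) ^ n * ∑ q, Complex.normSq (vec (A i) q) := by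
        simp_rw [bb84_amplitude_eq_kroneckerPow_mulVec]
        rw [Finset.sum_comm]
        gcongr with i
        exact bessel i
    _ = (3 / 4 : ℝ) ^ n := by
        rw [← Finset.mul_sum, sum_sum_normSq_vec_of_sum_conjTranspose_mul_self hA]
        simp only [Fintype.card_fun, Fintype.card_fin, Nat.cast_pow, Nat.cast_ofNat]
        rw [← inv_pow, ← mul_pow, ← mul_pow]
        norm_num

/-- For every quantum channel from `n` qubits to `2n` qubits (given by Kraus operators
`A i` with `∑ i, (A i)ᴴ * A i = 1`), the average cloning success probability over the
`4^n` product BB84 states, namely `4^{-n} ∑ k ⟨Ψ_k ⊗ Ψ_k| Φ(|Ψ_k⟩⟨Ψ_k|) |Ψ_k ⊗ Ψ_k⟩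
= 4^{-n} ∑ k ∑ i |⟨Ψ_k ⊗ Ψ_k| A i |Ψ_k⟩|²`, is at most `(3/4)^n`. -/
theorem wiesner_counterfeit_bound (n : ℕ) (hn : 1 ≤ n) {ι : Type} [Fintype ι]
    (A : ι → Matrix ((Fin n → Fin 2) × (Fin n → Fin 2)) (Fin n → Fin 2) ℂ)
    (hA : ∑ i, (A i)ᴴ * A i = 1) :
    ((4 : ℝ) ^ n)⁻¹ * ∑ k : Fin n → Fin 4, ∑ i,
        Complex.normSq
          (star (tensN n (bb84Prod n k) (bb84Prod n k)) ⬝ᵥ (A i).mulVec (bb84Prod n k))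
      ≤ (3 / 4 : ℝ) ^ n :=
  wiesner_counterfeit_bound_general n A hA
end

section
/- Let A_0 = (1/√12)·[[3,0],[0,1],[0,1],[1,0]] and A_1 = (1/√12)·[[0,1],[1,0],[1,0],[0,3]] be 4×2 complex matrices. Then A_0*A_0 + A_1*A_1 = I_2 (so ρ ↦ A_0 ρ A_0* + A_1 ρ A_1* is a quantum channel), and for each of the four BB84 states |ψ_k⟩ it holds that ⟨ψ_k ⊗ ψ_k| (A_0 |ψ_k⟩⟨ψ_k| A_0* + A_1 |ψ_k⟩⟨ψ_k| A_1*) |ψ_k ⊗ ψ_k⟩ = 3/4, where ℂ⁴ is identified with ℂ²⊗ℂ². Consequently the average cloning success probability of this channel over the four BB84 states is exactly 3/4. -/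
/-!
For a pure input `ρ = |ψ⟩⟨ψ|` the success probability `⟨ψψ| Σᵢ Aᵢ ρ Aᵢ* |ψψ⟩` equals
`Σᵢ |⟨ψψ|Aᵢ|ψ⟩|²`. For a real state `ψ = (a, b)` the two amplitudes are
`3a(a² + b²)/√12` and `3b(a² + b²)/√12`, so on every real unit vector the success probability
is `9(a² + b²)/12 = 3/4`, and the four BB84 states are real unit vectors.
-/

open Matrix

/-- Tensor product `u ⊗ v ∈ ℂ⁴` of two qubit vectors, with respect to the basis
ordering `|00⟩, |01⟩, |10⟩, |11⟩`. -/
def tens4 (u v : Fin 2 → ℂ) : Fin 4 → ℂ :=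
  ![u 0 * v 0, u 0 * v 1, u 1 * v 0, u 1 * v 1]

/-- The first Kraus operator of the optimal cloner for Wiesner's scheme. -/
noncomputable def A₀ : Matrix (Fin 4) (Fin 2) ℂ :=
  (Real.sqrt 12 : ℂ)⁻¹ • !![3, 0; 0, 1; 0, 1; 1, 0]

/-- The second Kraus operator of the optimal cloner for Wiesner's scheme. -/
noncomputable def A₁ : Matrix (Fin 4) (Fin 2) ℂ :=
  (Real.sqrt 12 : ℂ)⁻¹ • !![0, 1; 1, 0; 1, 0; 0, 3]

theorem dotProduct_mul_vecMulVec_star_mul_conjTranspose_mulVec {α m n : Type*} [Fintype m]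
    [Fintype n] [CommRing α] [StarRing α] (A : Matrix m n α) (v : n → α) (w : m → α) :
    star w ⬝ᵥ (A * vecMulVec v (star v) * Aᴴ) *ᵥ w
      = (star w ⬝ᵥ A *ᵥ v) * star (star w ⬝ᵥ A *ᵥ v) := by
  rw [mul_vecMulVec, vecMulVec_mul, ← star_mulVec, vecMulVec_mulVec, dotProduct_smul,
    star_dotProduct, op_smul_eq_mul]

theorem ofReal_sqrt_inv_sq {x : ℝ} (hx : 0 ≤ x) : ((Real.sqrt x : ℂ)⁻¹) ^ 2 = (x : ℂ)⁻¹ := by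
  rw [inv_pow, ← Complex.ofReal_pow, Real.sq_sqrt hx]

theorem star_tens4 (u v : Fin 2 → ℂ) : star (tens4 u v) = tens4 (star u) (star v) := by
  ext i; fin_cases i <;> simp [tens4]

theorem conjTranspose_mul_self_A₀_add_A₁ : A₀ᴴ * A₀ + A₁ᴴ * A₁ = 1 := by
  have hc : star (Real.sqrt 12 : ℂ)⁻¹ * (Real.sqrt 12 : ℂ)⁻¹ = 12⁻¹ := by
    simpa [sq] using ofReal_sqrt_inv_sq (x := 12) (by norm_num)
  have hM : let M₀ : Matrix (Fin 4) (Fin 2) ℂ := !![3, 0; 0, 1; 0, 1; 1, 0]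
      let M₁ : Matrix (Fin 4) (Fin 2) ℂ := !![0, 1; 1, 0; 1, 0; 0, 3]
      M₀ᴴ * M₀ + M₁ᴴ * M₁ = (12 : ℂ) • 1 := by
    ext i j
    fin_cases i <;> fin_cases j <;>
      simp [Matrix.mul_apply, Fin.sum_univ_succ, one_apply, Complex.conj_ofNat] <;> norm_num
  rw [A₀, A₁, conjTranspose_smul, conjTranspose_smul, Matrix.smul_mul, Matrix.smul_mul,
    Matrix.mul_smul, Matrix.mul_smul, smul_smul, smul_smul, hc, ← smul_add, hM, smul_smul,
    inv_mul_cancel₀ (by norm_num), one_smul]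

theorem tens4_self_dotProduct_A₀_mulVec (u : Fin 2 → ℂ) :
    tens4 u u ⬝ᵥ A₀ *ᵥ u = 3 * (Real.sqrt 12 : ℂ)⁻¹ * u 0 * (u 0 ^ 2 + u 1 ^ 2) := by
  simp only [tens4, A₀, dotProduct, mulVec, Fin.sum_univ_four, Fin.sum_univ_two,
    Matrix.smul_apply, of_apply, cons_val, smul_eq_mul]
  ring

theorem tens4_self_dotProduct_A₁_mulVec (u : Fin 2 → ℂ) :
    tens4 u u ⬝ᵥ A₁ *ᵥ u = 3 * (Real.sqrt 12 : ℂ)⁻¹ * u 1 * (u 0 ^ 2 + u 1 ^ 2) := by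
  simp only [tens4, A₁, dotProduct, mulVec, Fin.sum_univ_four, Fin.sum_univ_two,
    Matrix.smul_apply, of_apply, cons_val, smul_eq_mul]
  ring

noncomputable def cloningFidelity (u : Fin 2 → ℂ) : ℂ :=
  star (tens4 u u) ⬝ᵥ
    (A₀ * vecMulVec u (star u) * A₀ᴴ + A₁ * vecMulVec u (star u) * A₁ᴴ) *ᵥ tens4 u u

theorem cloningFidelity_eq (u : Fin 2 → ℂ) :
    cloningFidelity u =
      (star (tens4 u u) ⬝ᵥ A₀ *ᵥ u) * star (star (tens4 u u) ⬝ᵥ A₀ *ᵥ u) +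
      (star (tens4 u u) ⬝ᵥ A₁ *ᵥ u) * star (star (tens4 u u) ⬝ᵥ A₁ *ᵥ u) := by
  rw [cloningFidelity, add_mulVec, dotProduct_add,
    dotProduct_mul_vecMulVec_star_mul_conjTranspose_mulVec,
    dotProduct_mul_vecMulVec_star_mul_conjTranspose_mulVec]

theorem cloningFidelity_of_star_eq_self {u : Fin 2 → ℂ} (hu : star u = u)
    (h : u 0 ^ 2 + u 1 ^ 2 = 1) : cloningFidelity u = 3 / 4 := by
  have hc : ((Real.sqrt 12 : ℂ)⁻¹) ^ 2 = 1 / 12 := by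
    rw [ofReal_sqrt_inv_sq (by norm_num), Complex.ofReal_ofNat, one_div]
  have hu₀ : star (u 0) = u 0 := congrFun hu 0
  have hu₁ : star (u 1) = u 1 := congrFun hu 1
  rw [cloningFidelity_eq, star_tens4, hu, tens4_self_dotProduct_A₀_mulVec,
    tens4_self_dotProduct_A₁_mulVec, h]
  simp only [star_mul', star_one, Complex.star_def, map_inv₀, Complex.conj_ofReal, hu₀, hu₁,
    star_ofNat]
  linear_combination 9 * ((Real.sqrt 12 : ℂ)⁻¹) ^ 2 * h + 9 * hc

theorem star_bb84 (k : Fin 4) : star (bb84 k) = bb84 k := by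
  fin_cases k <;> ext i <;> fin_cases i <;> simp [bb84]

theorem bb84_sq_add_sq (k : Fin 4) : bb84 k 0 ^ 2 + bb84 k 1 ^ 2 = 1 := by
  have hs : ((Real.sqrt 2 : ℂ)⁻¹) ^ 2 = 1 / 2 := by
    rw [ofReal_sqrt_inv_sq (by norm_num), Complex.ofReal_ofNat, one_div]
  fin_cases k <;> simp [bb84, hs] <;> norm_num

theorem cloningFidelity_bb84 (k : Fin 4) : cloningFidelity (bb84 k) = 3 / 4 :=
  cloningFidelity_of_star_eq_self (star_bb84 k) (bb84_sq_add_sq k)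

/-- The map `ρ ↦ A₀ ρ A₀* + A₁ ρ A₁*` is a quantum channel (the Kraus operators satisfy
`A₀*A₀ + A₁*A₁ = I`), and it clones each of the four BB84 states with success
probability exactly `3/4`; consequently its average success probability is `3/4`. -/
theorem wiesner_optimal_cloner :
    A₀ᴴ * A₀ + A₁ᴴ * A₁ = 1 ∧
    (∀ k : Fin 4,
      star (tens4 (bb84 k) (bb84 k)) ⬝ᵥ
        (A₀ * vecMulVec (bb84 k) (star (bb84 k)) * A₀ᴴ +
         A₁ * vecMulVec (bb84 k) (star (bb84 k)) * A₁ᴴ).mulVec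
        (tens4 (bb84 k) (bb84 k)) = (3 / 4 : ℂ)) ∧
    (1 / 4 : ℂ) * ∑ k : Fin 4,
      star (tens4 (bb84 k) (bb84 k)) ⬝ᵥ
        (A₀ * vecMulVec (bb84 k) (star (bb84 k)) * A₀ᴴ +
         A₁ * vecMulVec (bb84 k) (star (bb84 k)) * A₁ᴴ).mulVec
        (tens4 (bb84 k) (bb84 k)) = (3 / 4 : ℂ) := by
  refine ⟨conjTranspose_mul_self_A₀_add_A₁, cloningFidelity_bb84, ?_⟩
  change (1 / 4 : ℂ) * ∑ k : Fin 4, cloningFidelity (bb84 k) = 3 / 4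
  simp only [cloningFidelity_bb84, Finset.sum_const, Finset.card_univ, Fintype.card_fin]
  norm_num
end

section
/- For every finite ensemble {(p_k, |ψ_k⟩)}_{k=1}^{N} of unit vectors |ψ_k⟩ ∈ ℂ² with probabilities p_k ≥ 0 summing to 1, there exists a quantum channel Φ from 2×2 complex matrices to 4×4 complex matrices (given by Kraus operators A_i with Σ_i A_i*A_i = I) whose average cloning success probability Σ_k p_k ⟨ψ_k ⊗ ψ_k| Φ(|ψ_k⟩⟨ψ_k|) |ψ_k ⊗ ψ_k⟩ is at least 2/3. Hence no single-qubit quantum money scheme has optimal simple counterfeiting probability below 2/3. -/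
/-!
The universal symmetric cloner does the job for every ensemble at once. Its Kraus operators
`A i v = c (v ⊗ eᵢ + eᵢ ⊗ v)` satisfy `∑ i, A iᴴ A i = 2 (d + 1) c² • 1`, and the amplitude
`⟨ψ ⊗ ψ| A i |ψ⟩ = 2 c ψ̄ᵢ` shows that every unit vector is cloned with probability
`4 c² = 2 / (d + 1)`, which is `2 / 3` for a qubit.
-/

open Matrix

lemma star_dotProduct_self_eq_sum_normSq {ι : Type*} [Fintype ι] (v : ι → ℂ) :
    star v ⬝ᵥ v = ((∑ i, Complex.normSq (v i) : ℝ) : ℂ) := by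
  simp [dotProduct, Complex.normSq_eq_conj_mul_self]

section SymmetricCloner

variable {ι : Type*} [Fintype ι] [DecidableEq ι]

noncomputable def symCloner (c : ℝ) (i : ι) : Matrix (ι × ι) ι ℂ :=
  fun q j => c * ((if q = (j, i) then 1 else 0) + (if q = (i, j) then 1 else 0))

lemma conjTranspose_symCloner_mul_symCloner_apply (c : ℝ) (i j j' : ι) :
    ((symCloner c i)ᴴ * symCloner c i) j j' =
      c ^ 2 * (2 * (if j = j' then 1 else 0) + 2 * (if j = i ∧ j' = i then 1 else 0)) := by
  simp only [symCloner, mul_apply, conjTranspose_apply, Complex.star_def,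
    Complex.conj_ofReal, map_add, apply_ite (starRingEnd ℂ), map_zero, mul_add, add_mul,
    mul_ite, mul_one, mul_zero, Finset.sum_add_distrib, Finset.sum_ite_eq', Finset.mem_univ,
    if_true, Prod.mk.injEq]
  split_ifs <;> grind

lemma sum_conjTranspose_symCloner_mul_symCloner (c : ℝ) :
    ∑ i : ι, (symCloner c i)ᴴ * symCloner c i =
      ((2 * (Fintype.card ι + 1) * c ^ 2 : ℝ) : ℂ) • 1 := by
  ext j j'
  simp only [Matrix.sum_apply, conjTranspose_symCloner_mul_symCloner_apply, Matrix.smul_apply,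
    one_apply, ← Finset.mul_sum, Finset.sum_add_distrib]
  split_ifs with h
  · subst h
    simp [Finset.card_univ]
    ring
  · simp [Ne.symm h]

lemma symCloner_mulVec_apply (c : ℝ) (i : ι) (v : ι → ℂ) (a b : ι) :
    (symCloner c i *ᵥ v) (a, b) =
      c * ((if b = i then v a else 0) + (if a = i then v b else 0)) := by
  simp [symCloner, mulVec, dotProduct, Prod.ext_iff, mul_add, add_mul, ite_and,
    Finset.sum_add_distrib]

lemma symCloner_cloning_amplitude (c : ℝ) (ψ : ι → ℂ) (i : ι) :
    star (fun q : ι × ι => ψ q.1 * ψ q.2) ⬝ᵥ symCloner c i *ᵥ ψ =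
      2 * c * star (ψ i) * (star ψ ⬝ᵥ ψ) := by
  simp only [dotProduct, Fintype.sum_prod_type, symCloner_mulVec_apply, Pi.star_apply, star_mul',
    mul_add, mul_ite, mul_zero, Finset.sum_add_distrib, Finset.sum_ite_eq', Finset.mem_univ,
    if_true, Finset.mul_sum, Finset.sum_ite_irrel, Finset.sum_const_zero]
  rw [← Finset.sum_add_distrib]
  exact Finset.sum_congr rfl fun _ _ => by ring

lemma sum_normSq_symCloner_cloning_amplitude (c : ℝ) {ψ : ι → ℂ} (hψ : star ψ ⬝ᵥ ψ = 1) :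
    ∑ i, Complex.normSq (star (fun q : ι × ι => ψ q.1 * ψ q.2) ⬝ᵥ symCloner c i *ᵥ ψ) =
      4 * c ^ 2 := by
  have hnorm : ∑ i, Complex.normSq (ψ i) = 1 := by
    exact_mod_cast (star_dotProduct_self_eq_sum_normSq ψ).symm.trans hψ
  simp only [symCloner_cloning_amplitude, hψ, mul_one, Complex.normSq_mul, Complex.normSq_ofReal,
    Complex.star_def, Complex.normSq_conj, ← Finset.mul_sum, hnorm]
  norm_num
  ring

end SymmetricCloner

lemma sq_universalCloner_coeff (ι : Type*) [Fintype ι] :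
    (Real.sqrt (2 * (Fintype.card ι + 1)))⁻¹ ^ 2 = 1 / (2 * (Fintype.card ι + 1)) := by
  rw [inv_pow, Real.sq_sqrt (by positivity), one_div]

noncomputable def universalCloner (ι : Type*) [Fintype ι] [DecidableEq ι] :
    ι → Matrix (ι × ι) ι ℂ :=
  symCloner (Real.sqrt (2 * (Fintype.card ι + 1)))⁻¹

lemma sum_conjTranspose_universalCloner_mul_universalCloner {ι : Type*} [Fintype ι]
    [DecidableEq ι] :
    ∑ i, (universalCloner ι i)ᴴ * universalCloner ι i = 1 := by
  rw [universalCloner, sum_conjTranspose_symCloner_mul_symCloner, sq_universalCloner_coeff ι,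
    mul_one_div_cancel (by positivity), Complex.ofReal_one, one_smul]

lemma sum_normSq_universalCloner_cloning_amplitude {ι : Type*} [Fintype ι] [DecidableEq ι]
    {ψ : ι → ℂ} (hψ : star ψ ⬝ᵥ ψ = 1) :
    ∑ i, Complex.normSq (star (fun q : ι × ι => ψ q.1 * ψ q.2) ⬝ᵥ universalCloner ι i *ᵥ ψ) =
      2 / (Fintype.card ι + 1) := by
  rw [universalCloner, sum_normSq_symCloner_cloning_amplitude _ hψ, sq_universalCloner_coeff ι]
  field_simp
  ring

theorem qubit_scheme_counterfeit_lower_bound_general (N : ℕ) (p : Fin N → ℝ)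
    (ψ : Fin N → (Fin 2 → ℂ)) (hp1 : ∑ k, p k = 1)
    (hψ : ∀ k, star (ψ k) ⬝ᵥ ψ k = 1) :
    ∃ (m : ℕ) (A : Fin m → Matrix (Fin 2 × Fin 2) (Fin 2) ℂ),
      (∑ i, (A i)ᴴ * A i = 1) ∧
      (2 / 3 : ℝ) ≤ ∑ k, p k * ∑ i,
        Complex.normSq (star (tens (ψ k) (ψ k)) ⬝ᵥ (A i).mulVec (ψ k)) := by
  refine ⟨2, universalCloner (Fin 2), sum_conjTranspose_universalCloner_mul_universalCloner, ?_⟩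
  have hclone : ∀ k, ∑ i, Complex.normSq
      (star (tens (ψ k) (ψ k)) ⬝ᵥ (universalCloner (Fin 2) i).mulVec (ψ k)) = 2 / 3 := by
    intro k
    exact (sum_normSq_universalCloner_cloning_amplitude (hψ k)).trans (by norm_num)
  simp_rw [hclone, ← Finset.sum_mul, hp1, one_mul, le_refl]

/-- For every finite ensemble `{(p_k, |ψ_k⟩)}` of single-qubit unit vectors with
probabilities summing to 1, there is a quantum channel from qubits to two qubits
(given by Kraus operators `A i` with `∑ i, (A i)ᴴ * A i = 1`) whose average cloning
success probability `∑ k p_k ⟨ψ_k ⊗ ψ_k| Φ(|ψ_k⟩⟨ψ_k|) |ψ_k ⊗ ψ_k⟩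
= ∑ k p_k ∑ i |⟨ψ_k ⊗ ψ_k| A i |ψ_k⟩|²` is at least `2/3`. Hence no single-qubit
quantum money scheme has optimal simple counterfeiting probability below `2/3`. -/
theorem qubit_scheme_counterfeit_lower_bound (N : ℕ) (p : Fin N → ℝ)
    (ψ : Fin N → (Fin 2 → ℂ)) (hp : ∀ k, 0 ≤ p k) (hp1 : ∑ k, p k = 1)
    (hψ : ∀ k, star (ψ k) ⬝ᵥ ψ k = 1) :
    ∃ (m : ℕ) (A : Fin m → Matrix (Fin 2 × Fin 2) (Fin 2) ℂ),
      (∑ i, (A i)ᴴ * A i = 1) ∧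
      (2 / 3 : ℝ) ≤ ∑ k, p k * ∑ i,
        Complex.normSq (star (tens (ψ k) (ψ k)) ⬝ᵥ (A i).mulVec (ψ k)) :=
  qubit_scheme_counterfeit_lower_bound_general N p ψ hp1 hψ
end

section
/- Let Q_1 be a positive semidefinite matrix indexed by (Y_1 × Z_1) × X_1 and Q_2 a positive semidefinite matrix indexed by (Y_2 × Z_2) × X_2 (finite index sets), viewed as operators on the corresponding tensor product spaces. For a positive semidefinite Q on (Y×Z)⊗X define v(Q) = sup { Tr(QX) : X positive semidefinite on (Y×Z)⊗X, Tr_{Y×Z}(X) = I_X }, where Tr_{Y×Z} is the partial trace onto the X-factor. Then the SDP value of the combined problem satisfies v(Q_1 ⊗ Q_2) = v(Q_1) · v(Q_2), where Q_1 ⊗ Q_2 is viewed as an operator on ((Y_1×Y_2)×(Z_1×Z_2)) ⊗ (X_1×X_2) after the natural reordering of tensor factors, and the partial trace in the combined constraint is over (Y_1×Y_2)×(Z_1×Z_2). -/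
/-
Tensoring feasible points gives `v(Q₁) v(Q₂) ≤ v(Q₁ ⊗ Q₂)`. For the converse write `Q₁ = Cᴴ C`
and let `M` be feasible for the product. Then `Tr((Q₁ ⊗ Q₂) M) = Tr(Q₂ N)` for the positive
semidefinite `N = Tr_{W₁×X₁}((C ⊗ 1) M (C ⊗ 1)ᴴ)`, and `Tr_{W₂} N ≤ v(Q₁) • 1`: for a vector `u`,
`u* (Tr_{W₂} N) u = Tr(Q₁ K)` where `K ⪰ 0` is `M` conditioned on `u`, whose marginal is
`‖u‖² • 1`. Finally, a positive semidefinite `N` with `Tr_W N ≤ c • 1` has `Tr(Q N) ≤ c v(Q)`,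
because adding `1 ⊗ (c • 1 - Tr_W N) / |W|` to `N` gives `c` times a feasible point, and this
only increases `Tr(Q N)` as `Q ⪰ 0`.
-/

open Matrix
open scoped ComplexOrder

/-- The partial trace onto the second (`X`) factor: `(Tr_W M)(x,x') = ∑ w M[(w,x),(w,x')]`. -/
noncomputable def ptraceW {W X : Type} [Fintype W] (M : Matrix (W × X) (W × X) ℂ) : Matrix X X ℂ :=
  Matrix.of fun x x' => ∑ w, M (w, x) (w, x')

/-- The value of the counterfeiting SDP associated with a positive semidefinite
objective operator `Q` on `(Y×Z)⊗X`:
`v(Q) = sup { Tr(QM) : M ⪰ 0, Tr_{Y×Z}(M) = I_X }`. -/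
noncomputable def sdpValue {W X : Type} [Fintype W] [Fintype X] [DecidableEq X]
    (Q : Matrix (W × X) (W × X) ℂ) : ℝ :=
  sSup {r | ∃ M : Matrix (W × X) (W × X) ℂ,
    M.PosSemidef ∧ ptraceW M = 1 ∧ ((Q * M).trace).re = r}

open scoped Kronecker MatrixOrder

lemma Real.sSup_mul_sSup_le {s t : Set ℝ} {c : ℝ} (hs : ∀ a ∈ s, 0 ≤ a) (ht : ∀ b ∈ t, 0 ≤ b)
    (hc : 0 ≤ c) (h : ∀ a ∈ s, ∀ b ∈ t, a * b ≤ c) : sSup s * sSup t ≤ c := by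
  rw [mul_comm, ← smul_eq_mul, ← Real.sSup_smul_of_nonneg (Real.sSup_nonneg ht)]
  refine Real.sSup_le ?_ hc
  rintro _ ⟨a, ha, rfl⟩
  dsimp only
  rw [smul_eq_mul, mul_comm, ← smul_eq_mul, ← Real.sSup_smul_of_nonneg (hs a ha)]
  refine Real.sSup_le ?_ hc
  rintro _ ⟨b, hb, rfl⟩
  exact h a ha b hb

lemma Matrix.star_dotProduct_mulVec_eq_trace {n : Type} [Fintype n] (A : Matrix n n ℂ)
    (u : n → ℂ) :
    star u ⬝ᵥ A *ᵥ u = (vecMulVec u (star u) * A).trace := by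
  rw [vecMulVec_mul, trace_vecMulVec, dotProduct_mulVec, dotProduct_comm]

section PartialTrace

variable {V W X : Type} [Fintype V] [Fintype W]

lemma ptraceW_eq_sum_submatrix (M : Matrix (W × X) (W × X) ℂ) :
    ptraceW M = ∑ w, M.submatrix (Prod.mk w) (Prod.mk w) := by
  ext x x'
  simp [ptraceW, Matrix.sum_apply]

lemma ptraceW_add (M N : Matrix (W × X) (W × X) ℂ) :
    ptraceW (M + N) = ptraceW M + ptraceW N := by
  ext x x'
  simp [ptraceW, Finset.sum_add_distrib]

lemma ptraceW_smul (c : ℂ) (M : Matrix (W × X) (W × X) ℂ) : ptraceW (c • M) = c • ptraceW M := by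
  ext x x'
  simp [ptraceW, Finset.mul_sum]

lemma Matrix.PosSemidef.ptraceW {M : Matrix (W × X) (W × X) ℂ} (hM : M.PosSemidef) :
    (ptraceW M).PosSemidef := by
  rw [ptraceW_eq_sum_submatrix]
  exact posSemidef_sum _ fun w _ => hM.submatrix _

lemma ptraceW_kronecker (A : Matrix W W ℂ) (B : Matrix X X ℂ) :
    ptraceW (A ⊗ₖ B) = A.trace • B := by
  ext x x'
  simp [ptraceW, trace, Finset.sum_mul]

lemma trace_one_kronecker_mul [Fintype X] [DecidableEq W] (A : Matrix X X ℂ)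
    (M : Matrix (W × X) (W × X) ℂ) :
    (((1 : Matrix W W ℂ) ⊗ₖ A) * M).trace = (A * ptraceW M).trace := by
  simp only [trace, diag_apply, mul_apply, kroneckerMap_apply, one_apply, ite_mul, one_mul,
    zero_mul, Fintype.sum_prod_type, Finset.sum_ite_irrel, Finset.sum_const_zero,
    Finset.sum_ite_eq, Finset.mem_univ, ↓reduceIte, ptraceW, of_apply, Finset.mul_sum]
  rw [Finset.sum_comm]
  exact Finset.sum_congr rfl fun x _ => Finset.sum_comm

lemma trace_ptraceW [Fintype X] [DecidableEq X] (M : Matrix (W × X) (W × X) ℂ) :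
    (ptraceW M).trace = M.trace := by
  classical
  simpa using (trace_one_kronecker_mul (W := W) (1 : Matrix X X ℂ) M).symm

lemma trace_mul_ptraceW_conj [Fintype X] [DecidableEq X] (A : Matrix X X ℂ) (C : Matrix W V ℂ)
    (M : Matrix (V × X) (V × X) ℂ) :
    (A * ptraceW ((C ⊗ₖ (1 : Matrix X X ℂ)) * M * (C ⊗ₖ (1 : Matrix X X ℂ))ᴴ)).trace
      = (((Cᴴ * C) ⊗ₖ A) * M).trace := by
  classical
  rw [← trace_one_kronecker_mul, ← Matrix.mul_assoc, ← Matrix.mul_assoc, trace_mul_comm,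
    ← Matrix.mul_assoc, conjTranspose_kronecker, conjTranspose_one, ← mul_kronecker_mul,
    ← mul_kronecker_mul]
  simp

lemma ptraceW_submatrix_prodCongr {W' : Type} [Fintype W'] (σ : W' ≃ W)
    (M : Matrix (W × X) (W × X) ℂ) :
    ptraceW (M.submatrix (σ.prodCongr (Equiv.refl X)) (σ.prodCongr (Equiv.refl X)))
      = ptraceW M := by
  ext x x'
  exact σ.sum_comp fun w => M (w, x) (w, x')

end PartialTrace

section Trace

variable {m n : Type} [Fintype m] [Fintype n]

lemma Matrix.trace_submatrix_mul_submatrix (e : m ≃ n) (A B : Matrix n n ℂ) :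
    (A.submatrix e e * B.submatrix e e).trace = (A * B).trace := by
  rw [submatrix_mul_equiv]
  exact e.sum_comp fun i => (A * B) i i

lemma Matrix.trace_mul_submatrix_symm (e : m ≃ n) (A : Matrix n n ℂ) (B : Matrix m m ℂ) :
    (A * B.submatrix e.symm e.symm).trace = (A.submatrix e e * B).trace := by
  rw [← trace_submatrix_mul_submatrix e, submatrix_submatrix]
  simp

lemma Matrix.trace_kronecker_mul_submatrix_prodComm (A : Matrix m m ℂ) (B : Matrix n n ℂ)
    (M : Matrix (n × m) (n × m) ℂ) :
    ((A ⊗ₖ B) * M.submatrix (Equiv.prodComm m n) (Equiv.prodComm m n)).trace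
      = ((B ⊗ₖ A) * M).trace := by
  rw [← trace_submatrix_mul_submatrix (Equiv.prodComm m n) (B ⊗ₖ A)]
  congr 3
  ext ⟨i, j⟩ ⟨k, l⟩
  simp [mul_comm]

lemma Matrix.PosSemidef.trace_mul_nonneg {A B : Matrix n n ℂ} (hA : A.PosSemidef)
    (hB : B.PosSemidef) : 0 ≤ (A * B).trace := by
  classical
  obtain ⟨C, rfl⟩ := CStarAlgebra.nonneg_iff_eq_star_mul_self.mp hB.nonneg
  rw [star_eq_conjTranspose, ← Matrix.mul_assoc, trace_mul_comm]
  simpa [Matrix.mul_assoc] using (hA.mul_mul_conjTranspose_same C).trace_nonneg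

end Trace

section Regroup

variable {W₁ W₂ X₁ X₂ : Type}
  {A C : Matrix (W₁ × X₁) (W₁ × X₁) ℂ} {B D : Matrix (W₂ × X₂) (W₂ × X₂) ℂ}

def regroupedKronecker (A : Matrix (W₁ × X₁) (W₁ × X₁) ℂ) (B : Matrix (W₂ × X₂) (W₂ × X₂) ℂ) :
    Matrix ((W₁ × W₂) × (X₁ × X₂)) ((W₁ × W₂) × (X₁ × X₂)) ℂ :=
  (A ⊗ₖ B).submatrix (Equiv.prodProdProdComm W₁ W₂ X₁ X₂) (Equiv.prodProdProdComm W₁ W₂ X₁ X₂)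

lemma regroupedKronecker_one_kronecker [DecidableEq W₁] [DecidableEq W₂]
    (a : Matrix X₁ X₁ ℂ) (b : Matrix X₂ X₂ ℂ) :
    regroupedKronecker ((1 : Matrix W₁ W₁ ℂ) ⊗ₖ a) ((1 : Matrix W₂ W₂ ℂ) ⊗ₖ b)
      = 1 ⊗ₖ (a ⊗ₖ b) := by
  ext ⟨⟨w₁, w₂⟩, x₁, x₂⟩ ⟨⟨w₁', w₂'⟩, x₁', x₂'⟩
  by_cases h₁ : w₁ = w₁' <;> by_cases h₂ : w₂ = w₂' <;>
    simp [regroupedKronecker, one_apply, h₁, h₂, mul_left_comm]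

variable [Fintype W₁] [Fintype W₂]

lemma ptraceW_regroupedKronecker :
    ptraceW (regroupedKronecker A B) = ptraceW A ⊗ₖ ptraceW B := by
  ext ⟨x₁, x₂⟩ ⟨x₁', x₂'⟩
  simp [ptraceW, regroupedKronecker, Fintype.sum_prod_type, Finset.sum_mul_sum]

variable [Fintype X₁] [Fintype X₂]

lemma Matrix.PosSemidef.regroupedKronecker (hA : A.PosSemidef) (hB : B.PosSemidef) :
    (regroupedKronecker A B).PosSemidef :=
  (hA.kronecker hB).submatrix _

lemma regroupedKronecker_mul_regroupedKronecker :
    regroupedKronecker A B * regroupedKronecker C D = regroupedKronecker (A * C) (B * D) := by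
  rw [regroupedKronecker, regroupedKronecker, submatrix_mul_equiv, ← mul_kronecker_mul]
  rfl

lemma trace_regroupedKronecker : (regroupedKronecker A B).trace = A.trace * B.trace := by
  rw [← trace_kronecker]
  exact (Equiv.prodProdProdComm W₁ W₂ X₁ X₂).sum_comp fun i => (A ⊗ₖ B) i i

lemma trace_kronecker_mul_submatrix_prodProdProdComm_symm
    (A : Matrix (W₁ × X₁) (W₁ × X₁) ℂ) (B : Matrix (W₂ × X₂) (W₂ × X₂) ℂ)
    (M : Matrix ((W₁ × W₂) × (X₁ × X₂)) ((W₁ × W₂) × (X₁ × X₂)) ℂ) :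
    ((A ⊗ₖ B) * M.submatrix (Equiv.prodProdProdComm W₁ W₂ X₁ X₂).symm
      (Equiv.prodProdProdComm W₁ W₂ X₁ X₂).symm).trace = (regroupedKronecker A B * M).trace :=
  trace_mul_submatrix_symm _ _ _

end Regroup

section SdpValue

variable {W X : Type} [Fintype W] [Fintype X] {Q M : Matrix (W × X) (W × X) ℂ}

lemma re_trace_mul_nonneg (hQ : Q.PosSemidef) (hM : M.PosSemidef) : 0 ≤ ((Q * M).trace).re :=
  (Complex.nonneg_iff.mp (hQ.trace_mul_nonneg hM)).1

variable [DecidableEq X]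

open scoped Matrix.Norms.L2Operator in
lemma re_trace_mul_le_norm_mul_card [DecidableEq W] (hQ : Q.PosSemidef) (hM : M.PosSemidef)
    (h1 : ptraceW M = 1) : ((Q * M).trace).re ≤ ‖Q‖ * Fintype.card X := by
  have hQle : (‖Q‖ • 1 - Q).PosSemidef := by
    rw [← le_iff, ← Algebra.algebraMap_eq_smul_one]
    exact IsSelfAdjoint.le_algebraMap_norm_self hQ.isHermitian
  have htrM : M.trace = Fintype.card X := by rw [← trace_ptraceW, h1, trace_one]
  have := re_trace_mul_nonneg hQle hM
  rw [sub_mul, trace_sub, Complex.sub_re, smul_mul, one_mul, trace_smul, htrM] at this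
  simpa using this

open scoped Matrix.Norms.L2Operator in
lemma le_sdpValue (hQ : Q.PosSemidef) (hM : M.PosSemidef) (h1 : ptraceW M = 1) :
    ((Q * M).trace).re ≤ sdpValue Q := by
  classical
  refine le_csSup ⟨‖Q‖ * Fintype.card X, ?_⟩ ⟨M, hM, h1, rfl⟩
  rintro _ ⟨M, hM, h1, rfl⟩
  exact re_trace_mul_le_norm_mul_card hQ hM h1

lemma sdpValue_nonneg (hQ : Q.PosSemidef) : 0 ≤ sdpValue Q :=
  Real.sSup_nonneg <| by
    rintro _ ⟨M, hM, -, rfl⟩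
    exact re_trace_mul_nonneg hQ hM

lemma sdpValue_le {c : ℝ} (hc : 0 ≤ c)
    (h : ∀ M, M.PosSemidef → ptraceW M = 1 → ((Q * M).trace).re ≤ c) : sdpValue Q ≤ c :=
  Real.sSup_le (by rintro _ ⟨M, hM, h1, rfl⟩; exact h M hM h1) hc

lemma re_trace_mul_le_of_ptraceW_eq_smul (hQ : Q.PosSemidef) (hM : M.PosSemidef) {c : ℝ}
    (hc : 0 ≤ c) (h : ptraceW M = (c : ℂ) • 1) : ((Q * M).trace).re ≤ c * sdpValue Q := by
  rcases hc.eq_or_lt with rfl | hc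
  · have : M.trace = 0 := by simp [← trace_ptraceW, h]
    simp [hM.trace_eq_zero_iff.mp this]
  · have hfeas : ptraceW (((c⁻¹ : ℝ) : ℂ) • M) = 1 := by
      rw [ptraceW_smul, h, smul_smul, ← Complex.ofReal_mul, inv_mul_cancel₀ hc.ne',
        Complex.ofReal_one, one_smul]
    have := le_sdpValue hQ (hM.smul (Complex.zero_le_real.mpr (inv_nonneg.mpr hc.le))) hfeas
    rw [Matrix.mul_smul, trace_smul, smul_eq_mul, Complex.re_ofReal_mul] at this
    rwa [← inv_mul_le_iff₀ hc]

lemma re_trace_mul_le_of_ptraceW_le (hQ : Q.PosSemidef) (hM : M.PosSemidef) {c : ℝ}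
    (hc : 0 ≤ c) (h : ptraceW M ≤ (c : ℂ) • 1) : ((Q * M).trace).re ≤ c * sdpValue Q := by
  classical
  rcases isEmpty_or_nonempty W with hW | hW
  · simpa [trace] using mul_nonneg hc (sdpValue_nonneg hQ)
  set r : ℝ := (Fintype.card W : ℝ)⁻¹
  set fill := (r : ℂ) • ((1 : Matrix W W ℂ) ⊗ₖ ((c : ℂ) • 1 - ptraceW M)) with hfill_def
  have hfill : fill.PosSemidef :=
    (PosSemidef.one.kronecker h).smul (Complex.zero_le_real.mpr (by positivity))
  have hmarg : ptraceW (M + fill) = (c : ℂ) • 1 := by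
    rw [ptraceW_add, hfill_def, ptraceW_smul, ptraceW_kronecker, trace_one, smul_smul]
    simp [r, Fintype.card_ne_zero]
  calc ((Q * M).trace).re
      ≤ ((Q * (M + fill)).trace).re := by
        rw [Matrix.mul_add, trace_add, Complex.add_re]
        exact le_add_of_nonneg_right (re_trace_mul_nonneg hQ hfill)
    _ ≤ c * sdpValue Q := re_trace_mul_le_of_ptraceW_eq_smul hQ (hM.add hfill) hc hmarg

end SdpValue

section Product

variable {W₁ W₂ X₁ X₂ : Type} [Fintype W₁] [Fintype W₂] [Fintype X₁] [Fintype X₂]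
  [DecidableEq X₁] [DecidableEq X₂]
  {Q₁ : Matrix (W₁ × X₁) (W₁ × X₁) ℂ} {Q₂ : Matrix (W₂ × X₂) (W₂ × X₂) ℂ}

lemma mul_sdpValue_le_sdpValue_regroupedKronecker (hQ₁ : Q₁.PosSemidef) (hQ₂ : Q₂.PosSemidef) :
    sdpValue Q₁ * sdpValue Q₂ ≤ sdpValue (regroupedKronecker Q₁ Q₂) := by
  refine Real.sSup_mul_sSup_le ?_ ?_ (sdpValue_nonneg (hQ₁.regroupedKronecker hQ₂)) ?_
  · rintro _ ⟨M, hM, -, rfl⟩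
    exact re_trace_mul_nonneg hQ₁ hM
  · rintro _ ⟨M, hM, -, rfl⟩
    exact re_trace_mul_nonneg hQ₂ hM
  · rintro _ ⟨M₁, hM₁, h₁, rfl⟩ _ ⟨M₂, hM₂, h₂, rfl⟩
    have := le_sdpValue (hQ₁.regroupedKronecker hQ₂) (hM₁.regroupedKronecker hM₂)
      (by rw [ptraceW_regroupedKronecker, h₁, h₂, one_kronecker_one])
    rwa [regroupedKronecker_mul_regroupedKronecker, trace_regroupedKronecker, Complex.mul_re,
      ← (Complex.nonneg_iff.mp (hQ₁.trace_mul_nonneg hM₁)).2, zero_mul, sub_zero] at this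

lemma ptraceW_ptraceW_conj_le_sdpValue [DecidableEq W₁] [DecidableEq W₂]
    (C : Matrix (W₁ × X₁) (W₁ × X₁) ℂ)
    {M : Matrix ((W₁ × X₁) × (W₂ × X₂)) ((W₁ × X₁) × (W₂ × X₂)) ℂ} (hM : M.PosSemidef)
    (hcon : ∀ (a : Matrix X₁ X₁ ℂ) (b : Matrix X₂ X₂ ℂ),
      ((((1 : Matrix W₁ W₁ ℂ) ⊗ₖ a) ⊗ₖ ((1 : Matrix W₂ W₂ ℂ) ⊗ₖ b)) * M).trace
        = a.trace * b.trace) :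
    ptraceW (ptraceW ((C ⊗ₖ (1 : Matrix (W₂ × X₂) (W₂ × X₂) ℂ)) * M *
      (C ⊗ₖ (1 : Matrix (W₂ × X₂) (W₂ × X₂) ℂ))ᴴ)) ≤ (sdpValue (Cᴴ * C) : ℂ) • 1 := by
  set S := ptraceW (ptraceW ((C ⊗ₖ (1 : Matrix (W₂ × X₂) (W₂ × X₂) ℂ)) * M *
    (C ⊗ₖ (1 : Matrix (W₂ × X₂) (W₂ × X₂) ℂ))ᴴ))
  have hS : S.PosSemidef := (hM.mul_mul_conjTranspose_same _).ptraceW.ptraceW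
  have hQ₁ : (Cᴴ * C).PosSemidef := posSemidef_conjTranspose_mul_self C
  refine PosSemidef.of_dotProduct_mulVec_nonneg
    ((isHermitian_one.smul (Complex.conj_ofReal _)).sub hS.isHermitian) fun u => ?_
  -- `K` is `M` conditioned on the vector `u` of the second system.
  set R := (1 : Matrix W₂ W₂ ℂ) ⊗ₖ replicateRow Unit (star u)
  set K := ptraceW ((R ⊗ₖ (1 : Matrix (W₁ × X₁) (W₁ × X₁) ℂ)) *
    M.submatrix (Equiv.prodComm _ _) (Equiv.prodComm _ _) *
    (R ⊗ₖ (1 : Matrix (W₁ × X₁) (W₁ × X₁) ℂ))ᴴ)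
  have hK : K.PosSemidef := ((hM.submatrix _).mul_mul_conjTranspose_same _).ptraceW
  have hRR : Rᴴ * R = 1 ⊗ₖ vecMulVec u (star u) := by
    rw [conjTranspose_kronecker, conjTranspose_one, ← mul_kronecker_mul, one_mul,
      conjTranspose_replicateRow, star_star, ← vecMulVec_eq]
  have htest : ∀ a, (a * K).trace = ((a ⊗ₖ (1 ⊗ₖ vecMulVec u (star u))) * M).trace := by
    intro a
    simp only [K]
    rw [trace_mul_ptraceW_conj, hRR, trace_kronecker_mul_submatrix_prodComm]
  set c : ℝ := ∑ x, Complex.normSq (u x)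
  have hc : (vecMulVec u (star u)).trace = c := by
    simp [trace_vecMulVec, dotProduct, c, Complex.mul_conj]
  have hKmarg : ptraceW K = (c : ℂ) • 1 := by
    rw [ext_iff_trace_mul_left]
    intro a
    rw [← trace_one_kronecker_mul, htest, hcon, hc, Matrix.mul_smul, mul_one, trace_smul,
      smul_eq_mul, mul_comm]
  have hquad : star u ⬝ᵥ S *ᵥ u = (Cᴴ * C * K).trace := by
    rw [star_dotProduct_mulVec_eq_trace, ← trace_one_kronecker_mul, trace_mul_ptraceW_conj,
      htest]
  have hle := re_trace_mul_le_of_ptraceW_eq_smul hQ₁ hK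
    (Finset.sum_nonneg fun x _ => Complex.normSq_nonneg (u x)) hKmarg
  rw [star_dotProduct_mulVec_eq_trace, Matrix.mul_sub, trace_sub, Matrix.mul_smul, mul_one,
    trace_smul, hc, ← star_dotProduct_mulVec_eq_trace, hquad,
    Complex.eq_re_of_ofReal_le (hQ₁.trace_mul_nonneg hK), smul_eq_mul, ← Complex.ofReal_mul,
    ← Complex.ofReal_sub, Complex.zero_le_real, sub_nonneg, mul_comm]
  exact hle

lemma re_trace_regroupedKronecker_mul_le (hQ₁ : Q₁.PosSemidef) (hQ₂ : Q₂.PosSemidef)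
    {M : Matrix ((W₁ × W₂) × (X₁ × X₂)) ((W₁ × W₂) × (X₁ × X₂)) ℂ} (hM : M.PosSemidef)
    (h1 : ptraceW M = 1) :
    ((regroupedKronecker Q₁ Q₂ * M).trace).re ≤ sdpValue Q₁ * sdpValue Q₂ := by
  classical
  obtain ⟨C, rfl⟩ := CStarAlgebra.nonneg_iff_eq_star_mul_self.mp hQ₁.nonneg
  rw [star_eq_conjTranspose] at hQ₁ ⊢
  set e := Equiv.prodProdProdComm W₁ W₂ X₁ X₂
  have hM' : (M.submatrix e.symm e.symm).PosSemidef := hM.submatrix _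
  have hcon (a : Matrix X₁ X₁ ℂ) (b : Matrix X₂ X₂ ℂ) :
      ((((1 : Matrix W₁ W₁ ℂ) ⊗ₖ a) ⊗ₖ ((1 : Matrix W₂ W₂ ℂ) ⊗ₖ b)) *
        M.submatrix e.symm e.symm).trace = a.trace * b.trace := by
    rw [trace_kronecker_mul_submatrix_prodProdProdComm_symm, regroupedKronecker_one_kronecker,
      trace_one_kronecker_mul, h1, Matrix.mul_one, trace_kronecker]
  rw [← trace_kronecker_mul_submatrix_prodProdProdComm_symm, ← trace_mul_ptraceW_conj]
  exact re_trace_mul_le_of_ptraceW_le hQ₂ (hM'.mul_mul_conjTranspose_same _).ptraceW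
    (sdpValue_nonneg hQ₁) (ptraceW_ptraceW_conj_le_sdpValue C hM' hcon)

theorem sdpValue_regroupedKronecker (hQ₁ : Q₁.PosSemidef) (hQ₂ : Q₂.PosSemidef) :
    sdpValue (regroupedKronecker Q₁ Q₂) = sdpValue Q₁ * sdpValue Q₂ :=
  le_antisymm
    (sdpValue_le (mul_nonneg (sdpValue_nonneg hQ₁) (sdpValue_nonneg hQ₂))
      fun _ hM h1 => re_trace_regroupedKronecker_mul_le hQ₁ hQ₂ hM h1)
    (mul_sdpValue_le_sdpValue_regroupedKronecker hQ₁ hQ₂)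

end Product

lemma sdpValue_submatrix_prodCongr {W' W X : Type} [Fintype W'] [Fintype W] [Fintype X]
    [DecidableEq X] (σ : W' ≃ W) (Q : Matrix (W × X) (W × X) ℂ) :
    sdpValue (Q.submatrix (σ.prodCongr (Equiv.refl X)) (σ.prodCongr (Equiv.refl X)))
      = sdpValue Q := by
  set f := σ.prodCongr (Equiv.refl X)
  unfold sdpValue
  congr 1
  ext r
  constructor
  · rintro ⟨M, hM, h1, rfl⟩
    refine ⟨M.submatrix f.symm f.symm, hM.submatrix _, ?_, by rw [trace_mul_submatrix_symm]⟩
    rw [← h1, ← ptraceW_submatrix_prodCongr σ.symm]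
    rfl
  · rintro ⟨M, hM, h1, rfl⟩
    exact ⟨M.submatrix f f, hM.submatrix _, by rw [ptraceW_submatrix_prodCongr, h1],
      by rw [trace_submatrix_mul_submatrix]⟩

/-- Product property (Mittal–Szegedy) of the counterfeiting SDP: for positive
semidefinite objective operators `Q₁` on `(Y₁×Z₁)⊗X₁` and `Q₂` on `(Y₂×Z₂)⊗X₂`,
the SDP value of the tensor product `Q₁ ⊗ Q₂` (reordered as an operator on
`((Y₁×Y₂)×(Z₁×Z₂))⊗(X₁×X₂)`) is the product of the individual SDP values. -/
theorem sdp_product_property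
    {Y₁ Z₁ X₁ Y₂ Z₂ X₂ : Type}
    [Fintype Y₁] [Fintype Z₁] [Fintype X₁] [Fintype Y₂] [Fintype Z₂] [Fintype X₂]
    [DecidableEq X₁] [DecidableEq X₂]
    (Q₁ : Matrix ((Y₁ × Z₁) × X₁) ((Y₁ × Z₁) × X₁) ℂ)
    (Q₂ : Matrix ((Y₂ × Z₂) × X₂) ((Y₂ × Z₂) × X₂) ℂ)
    (hQ₁ : Q₁.PosSemidef) (hQ₂ : Q₂.PosSemidef) :
    sdpValue (Matrix.of fun (a b : ((Y₁ × Y₂) × (Z₁ × Z₂)) × (X₁ × X₂)) =>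
        Q₁ ((a.1.1.1, a.1.2.1), a.2.1) ((b.1.1.1, b.1.2.1), b.2.1) *
        Q₂ ((a.1.1.2, a.1.2.2), a.2.2) ((b.1.1.2, b.1.2.2), b.2.2))
      = sdpValue Q₁ * sdpValue Q₂ := by
  let σ := (Equiv.prodProdProdComm Y₁ Y₂ Z₁ Z₂).prodCongr (Equiv.refl (X₁ × X₂))
  change sdpValue ((regroupedKronecker Q₁ Q₂).submatrix σ σ) = _
  rw [sdpValue_submatrix_prodCongr, sdpValue_regroupedKronecker hQ₁ hQ₂]
end

section
/- Let {|e_t^0⟩}_{t=0}^{d−1} and {|e_t^1⟩}_{t=0}^{d−1} be two orthonormal bases of ℂ^d, and let c = max_{s,t} |⟨e_s^0 | e_t^1⟩|² be their effective overlap. Consider the single-qudit classical-verification ticket scheme: the key is (t,b) ∈ {0,…,d−1} × {0,1} chosen uniformly, the ticket state is |e_t^b⟩, the bank independently sends two uniform challenges c_1, c_2 ∈ {0,1}, and an answer pair (a_1, a_2) is accepted if a_1 = t whenever c_1 = b and a_2 = t whenever c_2 = b. Then for every counterfeiting strategy, given for each challenge pair (c_1,c_2) by a POVM {A_{c_1 c_2}^{a_1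 a_2}}_{a_1,a_2 ∈ {0,…,d−1}} on ℂ^d (positive semidefinite operators summing to I_d), the success probability (1/(2d)) Σ_{t,b} (1/4) Σ_{c_1,c_2} Σ_{(a_1,a_2) valid for (t,b,c_1,c_2)} ⟨e_t^b| A_{c_1 c_2}^{a_1 a_2} |e_t^b⟩ is at most 3/4 + √c/4. -/
/-!
Every answer POVM accepts with probability at most one, so each of the four challenge pairs
contributes at most `2d` to the sum over keys. For the two mixed pairs the sum pairs every
answer operator `A^{st}` with two vectors from different bases, `|e_s^{c₁}⟩` and `|e_t^{c₂}⟩`,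
and for a positive semidefinite `M` and unit vectors `u, v` one has
`⟨u|M|u⟩ + ⟨v|M|v⟩ ≤ (1 + |⟨u|v⟩|) tr M`; summing over the POVM bounds each mixed pair by
`(1 + √c) d`. Altogether the success probability is at most `(4 + 2(1 + √c)) d / (8d)`.
-/

open Matrix
open scoped ComplexOrder InnerProductSpace

section TwoVectors

variable {𝕜 E : Type*} [RCLike 𝕜] [NormedAddCommGroup E] [InnerProductSpace 𝕜 E]

theorem norm_inner_sq_add_norm_inner_sq_le {u v : E} (hu : ‖u‖ = 1) (hv : ‖v‖ = 1) (w : E) :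
    ‖⟪u, w⟫_𝕜‖ ^ 2 + ‖⟪v, w⟫_𝕜‖ ^ 2 ≤ (1 + ‖⟪u, v⟫_𝕜‖) * ‖w‖ ^ 2 := by
  set α := ⟪u, w⟫_𝕜
  set β := ⟪v, w⟫_𝕜
  set g := ‖⟪u, v⟫_𝕜‖
  set N := ‖α‖ ^ 2 + ‖β‖ ^ 2
  -- `⟪x, w⟫ = N` and `‖x‖² ≤ (1 + g) N`, so Cauchy–Schwarz for `⟪x, w⟫` gives `N ≤ (1 + g) ‖w‖²`.
  set x := α • u + β • v
  have hxw : RCLike.re ⟪x, w⟫_𝕜 = N := by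
    simp only [x, inner_add_left, inner_smul_left, map_add]
    change RCLike.re (_ * α) + RCLike.re (_ * β) = N
    rw [RCLike.conj_mul, RCLike.conj_mul]
    norm_cast
  have hx : ‖x‖ ^ 2 ≤ (1 + g) * N := by
    have hαβ : 2 * (‖α‖ * ‖β‖) ≤ N := by nlinarith [sq_nonneg (‖α‖ - ‖β‖)]
    have hcross : RCLike.re ⟪α • u, β • v⟫_𝕜 ≤ ‖α‖ * ‖β‖ * g :=
      calc _ ≤ ‖⟪α • u, β • v⟫_𝕜‖ := RCLike.re_le_norm _
        _ = ‖α‖ * ‖β‖ * g := by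
          simp only [inner_smul_left, inner_smul_right, norm_mul, RCLike.norm_conj, g]
          ring
    rw [norm_add_sq (𝕜 := 𝕜), norm_smul, norm_smul, hu, hv]
    nlinarith [norm_nonneg ⟪u, v⟫_𝕜]
  have hN : N ≤ ‖x‖ * ‖w‖ := hxw ▸ re_inner_le_norm x w
  rcases (by positivity : 0 ≤ N).eq_or_lt with hN0 | hN0
  · rw [← hN0]; positivity
  · refine le_of_mul_le_mul_left ?_ hN0
    calc N * N ≤ ‖x‖ ^ 2 * ‖w‖ ^ 2 := by nlinarith
      _ ≤ (1 + g) * N * ‖w‖ ^ 2 := by gcongr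
      _ = N * ((1 + g) * ‖w‖ ^ 2) := by ring

end TwoVectors

section PosSemidef

variable {𝕜 n : Type*} [RCLike 𝕜] [Fintype n]

theorem re_star_dotProduct_self (z : n → 𝕜) :
    RCLike.re (star z ⬝ᵥ z) = ‖WithLp.toLp 2 z‖ ^ 2 := by
  rw [← inner_self_eq_norm_sq (𝕜 := 𝕜), EuclideanSpace.inner_toLp_toLp, dotProduct_comm]

open scoped MatrixOrder in
theorem re_dotProduct_mulVec_add_le_of_posSemidef {M : Matrix n n 𝕜} (hM : M.PosSemidef)
    {u v : n → 𝕜} (hu : star u ⬝ᵥ u = 1) (hv : star v ⬝ᵥ v = 1) :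
    RCLike.re (star u ⬝ᵥ M *ᵥ u) + RCLike.re (star v ⬝ᵥ M *ᵥ v)
      ≤ (1 + ‖star u ⬝ᵥ v‖) * RCLike.re M.trace := by
  classical
  -- `M = Bᴴ B`, so both sides are sums over the rows of `B` of the two-vector inequality.
  obtain ⟨B, rfl⟩ := CStarAlgebra.nonneg_iff_eq_star_mul_self.mp hM.nonneg
  set r : n → EuclideanSpace 𝕜 n := fun i => WithLp.toLp 2 (star (B i))
  have hquad : ∀ z : n → 𝕜, RCLike.re (star z ⬝ᵥ (star B * B) *ᵥ z)
      = ∑ i, ‖⟪WithLp.toLp 2 z, r i⟫_𝕜‖ ^ 2 := by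
    intro z
    rw [← mulVec_mulVec, dotProduct_mulVec, star_eq_conjTranspose, vecMul_conjTranspose, star_star,
      re_star_dotProduct_self, EuclideanSpace.norm_sq_eq]
    refine Finset.sum_congr rfl fun i _ => ?_
    rw [norm_inner_symm, EuclideanSpace.inner_toLp_toLp, star_star, dotProduct_comm]
    rfl
  have htrace : RCLike.re (star B * B).trace = ∑ i, ‖r i‖ ^ 2 := by
    rw [star_eq_conjTranspose, ← star_vec_dotProduct_vec, re_star_dotProduct_self,
      EuclideanSpace.norm_sq_eq, Fintype.sum_prod_type, Finset.sum_comm]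
    simp [r, EuclideanSpace.norm_sq_eq, vec]
  have hunit : ∀ z : n → 𝕜, star z ⬝ᵥ z = 1 → ‖WithLp.toLp 2 z‖ = 1 := fun z hz => by
    rw [← pow_eq_one_iff_of_nonneg (norm_nonneg _) two_ne_zero, ← re_star_dotProduct_self, hz,
      RCLike.one_re]
  have hinner : star u ⬝ᵥ v = ⟪WithLp.toLp 2 u, WithLp.toLp 2 v⟫_𝕜 := dotProduct_comm _ _
  rw [hquad, hquad, htrace, hinner, Finset.mul_sum, ← Finset.sum_add_distrib]
  exact Finset.sum_le_sum fun i _ =>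
    norm_inner_sq_add_norm_inner_sq_le (hunit u hu) (hunit v hv) (r i)

end PosSemidef

section POVM

variable {ι κ n : Type*} [Fintype n]

noncomputable def outcomeProb (P : Matrix n n ℂ) (ψ : n → ℂ) : ℝ :=
  (star ψ ⬝ᵥ P *ᵥ ψ).re

theorem outcomeProb_nonneg {P : Matrix n n ℂ} (hP : P.PosSemidef) (ψ : n → ℂ) :
    0 ≤ outcomeProb P ψ :=
  (Complex.le_def.mp (hP.dotProduct_mulVec_nonneg ψ)).1

theorem outcomeProb_sum (s : Finset ι) (P : ι → Matrix n n ℂ) (ψ : n → ℂ) :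
    outcomeProb (∑ i ∈ s, P i) ψ = ∑ i ∈ s, outcomeProb (P i) ψ := by
  simp only [outcomeProb, sum_mulVec, dotProduct_sum, Complex.re_sum]

theorem outcomeProb_one [DecidableEq n] {ψ : n → ℂ} (hψ : star ψ ⬝ᵥ ψ = 1) :
    outcomeProb 1 ψ = 1 := by
  simp [outcomeProb, hψ]

variable [Fintype ι] [Fintype κ] [DecidableEq n] {P : ι → κ → Matrix n n ℂ}

theorem sum_sum_outcomeProb_eq_one (hP : ∑ i, ∑ j, P i j = 1) {ψ : n → ℂ}
    (hψ : star ψ ⬝ᵥ ψ = 1) : ∑ i, ∑ j, outcomeProb (P i j) ψ = 1 := by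
  simp only [← outcomeProb_sum, hP, outcomeProb_one hψ]

theorem sum_sum_outcomeProb_add_le (hPpos : ∀ i j, (P i j).PosSemidef)
    (hP : ∑ i, ∑ j, P i j = 1) {u : ι → n → ℂ} {v : κ → n → ℂ}
    (hu : ∀ i, star (u i) ⬝ᵥ u i = 1) (hv : ∀ j, star (v j) ⬝ᵥ v j = 1) {g : ℝ}
    (hg : ∀ i j, ‖star (u i) ⬝ᵥ v j‖ ≤ g) :
    ∑ i, ∑ j, (outcomeProb (P i j) (u i) + outcomeProb (P i j) (v j))
      ≤ (1 + g) * Fintype.card n :=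
  calc _ ≤ ∑ i, ∑ j, (1 + g) * (P i j).trace.re :=
        Finset.sum_le_sum fun i _ => Finset.sum_le_sum fun j _ =>
          (re_dotProduct_mulVec_add_le_of_posSemidef (hPpos i j) (hu i) (hv j)).trans <|
            mul_le_mul_of_nonneg_right (by linarith [hg i j])
              (Complex.le_def.mp (hPpos i j).trace_nonneg).1
    _ = (1 + g) * Fintype.card n := by
        simp only [← Finset.mul_sum, ← Complex.re_sum, ← trace_sum, hP, trace_one]
        simp

end POVM

section Ticket

variable {ι n : Type*} [Fintype ι] [DecidableEq ι] [Fintype n]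
  {P : ι → ι → Matrix n n ℂ} {ψ : n → ℂ} {b c₁ c₂ : Fin 2} {t : ι}

noncomputable def acceptProb (P : ι → ι → Matrix n n ℂ) (ψ : n → ℂ) (b c₁ c₂ : Fin 2) (t : ι) :
    ℝ :=
  ∑ a₁, ∑ a₂, if (c₁ = b → a₁ = t) ∧ (c₂ = b → a₂ = t) then outcomeProb (P a₁ a₂) ψ else 0

theorem acceptProb_le_one [DecidableEq n] (hPpos : ∀ i j, (P i j).PosSemidef)
    (hP : ∑ i, ∑ j, P i j = 1) (hψ : star ψ ⬝ᵥ ψ = 1) : acceptProb P ψ b c₁ c₂ t ≤ 1 :=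
  calc acceptProb P ψ b c₁ c₂ t ≤ ∑ a₁, ∑ a₂, outcomeProb (P a₁ a₂) ψ :=
        Finset.sum_le_sum fun a₁ _ => Finset.sum_le_sum fun a₂ _ => by
          split
          · exact le_rfl
          · exact outcomeProb_nonneg (hPpos a₁ a₂) ψ
    _ = 1 := sum_sum_outcomeProb_eq_one hP hψ

theorem acceptProb_of_eq_of_ne (h₁ : c₁ = b) (h₂ : c₂ ≠ b) :
    acceptProb P ψ b c₁ c₂ t = ∑ a₂, outcomeProb (P t a₂) ψ := by
  simp [acceptProb, h₁, h₂]

theorem acceptProb_of_ne_of_eq (h₁ : c₁ ≠ b) (h₂ : c₂ = b) :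
    acceptProb P ψ b c₁ c₂ t = ∑ a₁, outcomeProb (P a₁ t) ψ := by
  simp [acceptProb, h₁, h₂]

theorem sum_acceptProb_le_of_ne [DecidableEq n] (hPpos : ∀ i j, (P i j).PosSemidef)
    (hP : ∑ i, ∑ j, P i j = 1)
    {e : Fin 2 → ι → n → ℂ} (he : ∀ b t, star (e b t) ⬝ᵥ e b t = 1) (hc : c₁ ≠ c₂) {g : ℝ}
    (hg : ∀ s t, ‖star (e c₁ s) ⬝ᵥ e c₂ t‖ ≤ g) :
    ∑ b, ∑ t, acceptProb P (e b t) b c₁ c₂ t ≤ (1 + g) * Fintype.card n := by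
  have huniv : (Finset.univ : Finset (Fin 2)) = {c₁, c₂} :=
    (Finset.eq_univ_of_card _ (by rw [Finset.card_pair hc]; rfl)).symm
  rw [huniv, Finset.sum_pair hc]
  simp only [acceptProb_of_eq_of_ne rfl hc.symm, acceptProb_of_ne_of_eq hc rfl]
  rw [Finset.sum_comm (f := fun t a₁ => outcomeProb (P a₁ t) (e c₂ t))]
  simp only [← Finset.sum_add_distrib]
  exact sum_sum_outcomeProb_add_le hPpos hP (he c₁) (he c₂) hg

end Ticket

/-- For two orthonormal bases `{|e_t^0⟩}` and `{|e_t^1⟩}` of `ℂ^d` with effective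
overlap `c = max_{s,t} |⟨e_s^0|e_t^1⟩|²`, every counterfeiting strategy against the
single-qudit classical-verification ticket scheme (key `(t,b)` uniform, ticket
`|e_t^b⟩`, two independent uniform challenges `c₁,c₂ ∈ {0,1}`, answer `(a₁,a₂)`
accepted iff `a_j = t` whenever `c_j = b`), given by POVMs
`{A_{c₁c₂}^{a₁a₂}}` on `ℂ^d`, has success probability at most `3/4 + √c/4`. -/
theorem classical_verification_counterfeit_bound (d : ℕ) (hd : 0 < d)
    (e : Fin 2 → Fin d → (Fin d → ℂ))
    (he : ∀ b s t, star (e b s) ⬝ᵥ e b t = if s = t then 1 else 0)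
    (c : ℝ)
    (hc : IsGreatest {x : ℝ | ∃ s t, x = Complex.normSq (star (e 0 s) ⬝ᵥ e 1 t)} c)
    (A : Fin 2 → Fin 2 → Fin d → Fin d → Matrix (Fin d) (Fin d) ℂ)
    (hApos : ∀ c₁ c₂ a₁ a₂, (A c₁ c₂ a₁ a₂).PosSemidef)
    (hAsum : ∀ c₁ c₂, ∑ a₁, ∑ a₂, A c₁ c₂ a₁ a₂ = 1) :
    (1 / (2 * d) : ℝ) * ∑ b : Fin 2, ∑ t : Fin d,
        (1 / 4 : ℝ) * ∑ c₁ : Fin 2, ∑ c₂ : Fin 2, ∑ a₁ : Fin d, ∑ a₂ : Fin d,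
          (if (c₁ = b → a₁ = t) ∧ (c₂ = b → a₂ = t)
            then (star (e b t) ⬝ᵥ (A c₁ c₂ a₁ a₂).mulVec (e b t)).re else 0)
      ≤ 3 / 4 + Real.sqrt c / 4 := by
  have hunit : ∀ b t, star (e b t) ⬝ᵥ e b t = 1 := fun b t => by simpa using he b t t
  have h01 : ∀ s t, ‖star (e 0 s) ⬝ᵥ e 1 t‖ ≤ Real.sqrt c := fun s t =>
    Real.sqrt_le_sqrt (hc.2 ⟨s, t, rfl⟩)
  have h10 : ∀ s t, ‖star (e 1 s) ⬝ᵥ e 0 t‖ ≤ Real.sqrt c := fun s t => by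
    rw [star_dotProduct, norm_star]
    exact h01 t s
  have hle : ∀ c₁ c₂, ∑ b, ∑ t, acceptProb (A c₁ c₂) (e b t) b c₁ c₂ t ≤ 2 * d := fun c₁ c₂ =>
    calc _ ≤ ∑ _b : Fin 2, ∑ _t : Fin d, (1 : ℝ) := Finset.sum_le_sum fun b _ =>
            Finset.sum_le_sum fun t _ => acceptProb_le_one (hApos c₁ c₂) (hAsum c₁ c₂) (hunit b t)
      _ = 2 * d := by simp
  have hd' : (0 : ℝ) < d := Nat.cast_pos.mpr hd
  calc _ = 1 / (8 * d) * ∑ c₁, ∑ c₂, ∑ b, ∑ t, acceptProb (A c₁ c₂) (e b t) b c₁ c₂ t := by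
        simp only [acceptProb, outcomeProb, Fin.sum_univ_two, Finset.sum_add_distrib, mul_add,
          ← Finset.mul_sum]
        field_simp
        ring
    _ ≤ 1 / (8 * d) * ((6 + 2 * Real.sqrt c) * d) := by
        gcongr
        have h00 := hle 0 0
        have h11 := hle 1 1
        have h01' := sum_acceptProb_le_of_ne (hApos 0 1) (hAsum 0 1) hunit (by decide) h01
        have h10' := sum_acceptProb_le_of_ne (hApos 1 0) (hAsum 1 0) hunit (by decide) h10
        simp only [Fin.sum_univ_two, Fintype.card_fin] at h00 h11 h01' h10' ⊢
        linarith
    _ = 3 / 4 + Real.sqrt c / 4 := by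
        field_simp
        ring
end

section
/- Let {|e_0^0⟩, |e_1^0⟩} and {|e_0^1⟩, |e_1^1⟩} be two orthonormal bases of ℂ², and let c = max_{s,t} |⟨e_s^0 | e_t^1⟩|². For the single-qubit classical-verification ticket scheme with these bases (key (t,b) ∈ {0,1}×{0,1} uniform, ticket state |e_t^b⟩, two independent uniform challenges c_1, c_2 ∈ {0,1}, answers (a_1,a_2) accepted if a_j = t whenever c_j = b), there exists a counterfeiting strategy, given for each challenge pair by a POVM {A_{c_1 c_2}^{a_1 a_2}}_{a_1,a_2 ∈ {0,1}} on ℂ², achieving success probability exactly 3/4 + √c/4. -/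
open Matrix
open scoped ComplexOrder InnerProductSpace

/-!
Split the sixteen (key, challenge) cases by the challenge pair. If `c₁ = c₂`, the attacker measures
in the basis `e_{c₁}` and reports the outcome twice: this is always accepted, for `b = c₁` because
the ticket is a basis vector and for `b ≠ c₁` because nothing is checked. If `c₁ ≠ c₂`, exactly one
answer is checked, in the basis `e_b`. Choose `s, t` with `c = |⟨e_s^0|e_t^1⟩|²`, let `v` be the
normalised bisector of `e_s^0` and a rephasing of `e_t^1`, and measure in `{v, v⊥}`, answering
`(s, t)` on `v` and `(s + 1, t + 1)` on `v⊥`. Then `|⟨e_s^0|v⟩|² = |⟨e_t^1|v⟩|² = (1 + √c)/2`,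
and in dimension two the same overlap reappears for `e_{s+1}^0`, `e_{t+1}^1` against `v⊥`. The
success probability is therefore `(2 + 2 · (1 + √c)/2) / 4 = 3/4 + √c/4`.
-/

theorem Complex.exists_norm_eq_one_mul_eq_norm (z : ℂ) : ∃ β : ℂ, ‖β‖ = 1 ∧ β * z = ‖z‖ := by
  refine ⟨Complex.exp (-(z.arg * Complex.I)), ?_, ?_⟩
  · rw [← neg_mul, ← Complex.ofReal_neg, Complex.norm_exp_ofReal_mul_I]
  · nth_rewrite 2 [← Complex.norm_mul_exp_arg_mul_I z]
    rw [mul_left_comm, ← Complex.exp_add, neg_add_cancel, Complex.exp_zero, mul_one]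

section InnerProductSpace

variable {E : Type*} [NormedAddCommGroup E] [InnerProductSpace ℂ E]

theorem exists_norm_inner_sq_eq_of_inner_eq_ofReal {x y : E} (hx : ‖x‖ = 1) (hy : ‖y‖ = 1)
    {r : ℝ} (hr : 0 ≤ r) (hxy : ⟪x, y⟫_ℂ = r) :
    ∃ v : E, ‖v‖ = 1 ∧ ‖⟪x, v⟫_ℂ‖ ^ 2 = (1 + r) / 2 ∧ ‖⟪y, v⟫_ℂ‖ ^ 2 = (1 + r) / 2 := by
  have hsum : ‖x + y‖ ^ 2 = 2 * (1 + r) := by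
    rw [@norm_add_sq ℂ, hx, hy, hxy, RCLike.re_to_complex, Complex.ofReal_re]; ring
  have hpos : 0 < ‖x + y‖ := by nlinarith [norm_nonneg (x + y)]
  have hinner : ∀ z : E, ⟪z, x + y⟫_ℂ = 1 + r →
      ‖⟪z, ((‖x + y‖⁻¹ : ℝ) : ℂ) • (x + y)⟫_ℂ‖ ^ 2 = (1 + r) / 2 := by
    intro z hz
    rw [inner_smul_right, hz, norm_mul, mul_pow, Complex.norm_real, ← Complex.ofReal_one,
      ← Complex.ofReal_add, Complex.norm_real, Real.norm_eq_abs, Real.norm_eq_abs, sq_abs, sq_abs,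
      inv_pow, hsum]
    field_simp
  refine ⟨((‖x + y‖⁻¹ : ℝ) : ℂ) • (x + y), ?_, hinner x ?_, hinner y ?_⟩
  · rw [norm_smul, Complex.norm_real, Real.norm_eq_abs, abs_inv, abs_norm, inv_mul_cancel₀ hpos.ne']
  · rw [inner_add_right, inner_self_eq_norm_sq_to_K, hx, hxy]; norm_num
  · rw [inner_add_right, inner_self_eq_norm_sq_to_K, hy, ← inner_conj_symm, hxy,
      Complex.conj_ofReal]
    norm_num; ring

theorem exists_norm_inner_sq_eq {x y : E} (hx : ‖x‖ = 1) (hy : ‖y‖ = 1) :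
    ∃ v : E, ‖v‖ = 1 ∧ ‖⟪x, v⟫_ℂ‖ ^ 2 = (1 + ‖⟪x, y⟫_ℂ‖) / 2 ∧
      ‖⟪y, v⟫_ℂ‖ ^ 2 = (1 + ‖⟪x, y⟫_ℂ‖) / 2 := by
  obtain ⟨β, hβ, hβxy⟩ := Complex.exists_norm_eq_one_mul_eq_norm ⟪x, y⟫_ℂ
  obtain ⟨v, hv, hxv, hyv⟩ := exists_norm_inner_sq_eq_of_inner_eq_ofReal (y := β • y) hx
    (by rw [norm_smul, hβ, hy, one_mul]) (norm_nonneg _) (by rw [inner_smul_right, hβxy])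
  refine ⟨v, hv, hxv, ?_⟩
  rwa [inner_smul_left, norm_mul, Complex.norm_conj, hβ, one_mul] at hyv

end InnerProductSpace

section Vectors

variable {n : Type*} [Fintype n]

theorem EuclideanSpace.inner_toLp_toLp_eq_star_dotProduct (x y : n → ℂ) :
    ⟪WithLp.toLp 2 x, WithLp.toLp 2 y⟫_ℂ = star x ⬝ᵥ y :=
  dotProduct_comm _ _

theorem EuclideanSpace.norm_toLp_eq_one_iff (x : n → ℂ) :
    ‖WithLp.toLp 2 x‖ = 1 ↔ star x ⬝ᵥ x = 1 := by
  rw [← EuclideanSpace.inner_toLp_toLp_eq_star_dotProduct]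
  refine ⟨inner_self_eq_one_of_norm_eq_one, fun h => ?_⟩
  have hsq := norm_sq_eq_re_inner (𝕜 := ℂ) (WithLp.toLp 2 x)
  rw [h, RCLike.one_re] at hsq
  exact (pow_eq_one_iff_of_nonneg (norm_nonneg _) two_ne_zero).mp hsq

theorem exists_normSq_star_dotProduct_eq {x y : n → ℂ} (hx : star x ⬝ᵥ x = 1)
    (hy : star y ⬝ᵥ y = 1) :
    ∃ v : n → ℂ, star v ⬝ᵥ v = 1 ∧
      Complex.normSq (star x ⬝ᵥ v) = (1 + √(Complex.normSq (star x ⬝ᵥ y))) / 2 ∧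
      Complex.normSq (star y ⬝ᵥ v) = (1 + √(Complex.normSq (star x ⬝ᵥ y))) / 2 := by
  rw [← EuclideanSpace.norm_toLp_eq_one_iff] at hx hy
  obtain ⟨v, hv, hxv, hyv⟩ := exists_norm_inner_sq_eq hx hy
  rw [← WithLp.toLp_ofLp 2 v] at hv hxv hyv
  simp only [EuclideanSpace.inner_toLp_toLp_eq_star_dotProduct, Complex.sq_norm] at hxv hyv
  rw [Complex.norm_def] at hxv hyv
  exact ⟨WithLp.ofLp v, (EuclideanSpace.norm_toLp_eq_one_iff _).mp hv, hxv, hyv⟩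

theorem normSq_star_dotProduct_comm (x y : n → ℂ) :
    Complex.normSq (star x ⬝ᵥ y) = Complex.normSq (star y ⬝ᵥ x) := by
  rw [star_dotProduct x y]
  exact Complex.normSq_conj _

def ketBra (x : n → ℂ) : Matrix n n ℂ := vecMulVec x (star x)

theorem ketBra_posSemidef (x : n → ℂ) : (ketBra x).PosSemidef :=
  posSemidef_vecMulVec_self_star x

theorem star_dotProduct_ketBra_mulVec (x y : n → ℂ) :
    star y ⬝ᵥ ketBra x *ᵥ y = Complex.normSq (star y ⬝ᵥ x) := by
  rw [ketBra, vecMulVec_mulVec, op_smul_eq_smul, dotProduct_smul, smul_eq_mul,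
    star_dotProduct x y]
  exact Complex.normSq_eq_conj_mul_self.symm

def IsOrthonormal {ι : Type*} [DecidableEq ι] (w : ι → n → ℂ) : Prop :=
  ∀ i j, star (w i) ⬝ᵥ w j = if i = j then 1 else 0

theorem IsOrthonormal.star_dotProduct_self {ι : Type*} [DecidableEq ι] {w : ι → n → ℂ}
    (hw : IsOrthonormal w) (i : ι) : star (w i) ⬝ᵥ w i = 1 := by
  simpa using hw i i

variable [DecidableEq n]

theorem IsOrthonormal.sum_ketBra {w : n → n → ℂ} (hw : IsOrthonormal w) :
    ∑ k, ketBra (w k) = 1 := by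
  have hW : (Matrix.of fun i k => w k i) ∈ unitaryGroup n ℂ := by
    rw [mem_unitaryGroup_iff']
    ext i j
    simpa [mul_apply, dotProduct, one_apply] using hw i j
  rw [← mem_unitaryGroup_iff.mp hW]
  ext i j
  simp [ketBra, mul_apply, Matrix.sum_apply, vecMulVec_apply]

theorem IsOrthonormal.sum_normSq {w : n → n → ℂ} (hw : IsOrthonormal w) {y : n → ℂ}
    (hy : star y ⬝ᵥ y = 1) : ∑ k, Complex.normSq (star y ⬝ᵥ w k) = 1 := by
  have h := congrArg (fun M => star y ⬝ᵥ M *ᵥ y) hw.sum_ketBra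
  simp only [sum_mulVec, dotProduct_sum, star_dotProduct_ketBra_mulVec, one_mulVec, hy] at h
  exact_mod_cast h

end Vectors

section Qubit

def qubitPerp (v : Fin 2 → ℂ) : Fin 2 → ℂ := ![-star (v 1), star (v 0)]

theorem isOrthonormal_qubitPerp {v : Fin 2 → ℂ} (hv : star v ⬝ᵥ v = 1) :
    IsOrthonormal ![v, qubitPerp v] := by
  have hv' : (starRingEnd ℂ) (v 0) * v 0 + (starRingEnd ℂ) (v 1) * v 1 = 1 := by
    simpa [dotProduct, Fin.sum_univ_two] using hv
  intro i j
  fin_cases i <;> fin_cases j <;> simp [qubitPerp, dotProduct, Fin.sum_univ_two]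
  all_goals first | linear_combination hv' | ring

theorem Fin.sum_univ_two_add {M : Type*} [AddCommMonoid M] (f : Fin 2 → M) (s : Fin 2) :
    ∑ i, f i = f s + f (s + 1) := by
  fin_cases s <;> simp [Fin.sum_univ_two, add_comm]

theorem IsOrthonormal.normSq_star_dotProduct_add {w e : Fin 2 → Fin 2 → ℂ}
    (hw : IsOrthonormal w) (he : IsOrthonormal e) (s k : Fin 2) :
    Complex.normSq (star (e (s + k)) ⬝ᵥ w k) = Complex.normSq (star (e s) ⬝ᵥ w 0) := by
  have hw0 := he.sum_normSq (hw.star_dotProduct_self 0)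
  have hes := hw.sum_normSq (he.star_dotProduct_self (s + 1))
  rw [Fin.sum_univ_two_add _ s] at hw0
  rw [Fin.sum_univ_two] at hes
  simp only [normSq_star_dotProduct_comm (w 0)] at hw0
  fin_cases k
  · simp
  · simp only [Fin.mk_one]; linarith

end Qubit

section LabelledPOVM

variable {n κ α : Type*} [Fintype κ] [DecidableEq α]

def labelledPOVM (w : κ → n → ℂ) (g₁ g₂ : κ → α) (a₁ a₂ : α) : Matrix n n ℂ :=
  ∑ k with g₁ k = a₁ ∧ g₂ k = a₂, ketBra (w k)

theorem labelledPOVM_posSemidef [Fintype n] (w : κ → n → ℂ) (g₁ g₂ : κ → α) (a₁ a₂ : α) :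
    (labelledPOVM w g₁ g₂ a₁ a₂).PosSemidef :=
  posSemidef_sum _ fun k _ => ketBra_posSemidef (w k)

theorem re_star_dotProduct_labelledPOVM_mulVec [Fintype n] (w : κ → n → ℂ) (g₁ g₂ : κ → α)
    (a₁ a₂ : α) (y : n → ℂ) : (star y ⬝ᵥ labelledPOVM w g₁ g₂ a₁ a₂ *ᵥ y).re =
      ∑ k with g₁ k = a₁ ∧ g₂ k = a₂, Complex.normSq (star y ⬝ᵥ w k) := by
  simp only [labelledPOVM, sum_mulVec, dotProduct_sum, Complex.re_sum,
    star_dotProduct_ketBra_mulVec, Complex.ofReal_re]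

variable [Fintype α]

theorem Finset.sum_sum_sum_filter_and {M : Type*} [AddCommMonoid M] (g₁ g₂ : κ → α)
    (f : κ → M) : ∑ a₁, ∑ a₂, ∑ k with g₁ k = a₁ ∧ g₂ k = a₂, f k = ∑ k, f k := by
  simp only [← Finset.filter_filter, Finset.sum_fiberwise]

theorem sum_labelledPOVM (w : κ → n → ℂ) (g₁ g₂ : κ → α) :
    ∑ a₁, ∑ a₂, labelledPOVM w g₁ g₂ a₁ a₂ = ∑ k, ketBra (w k) :=
  Finset.sum_sum_sum_filter_and g₁ g₂ _

theorem sum_ite_re_labelledPOVM [Fintype n] (w : κ → n → ℂ) (g₁ g₂ : κ → α)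
    (P : α → α → Prop) [DecidableRel P] (y : n → ℂ) :
    ∑ a₁, ∑ a₂, (if P a₁ a₂ then (star y ⬝ᵥ labelledPOVM w g₁ g₂ a₁ a₂ *ᵥ y).re else 0) =
      ∑ k, if P (g₁ k) (g₂ k) then Complex.normSq (star y ⬝ᵥ w k) else 0 := by
  simp only [re_star_dotProduct_labelledPOVM_mulVec, Finset.ite_sum_zero]
  rw [← Finset.sum_sum_sum_filter_and g₁ g₂]
  refine Finset.sum_congr rfl fun a₁ _ => Finset.sum_congr rfl fun a₂ _ =>
    Finset.sum_congr rfl fun k hk => ?_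
  obtain ⟨rfl, rfl⟩ := (Finset.mem_filter.mp hk).2
  rfl

end LabelledPOVM

section TicketAttack

variable (e : Fin 2 → Fin 2 → Fin 2 → ℂ) (w : Fin 2 → Fin 2 → ℂ) (σ : Fin 2 → Fin 2)

def ticketAttack (c₁ c₂ : Fin 2) : Fin 2 → Fin 2 → Matrix (Fin 2) (Fin 2) ℂ :=
  if c₁ = c₂ then labelledPOVM (e c₁) id id else labelledPOVM w (σ c₁ + ·) (σ c₂ + ·)

theorem ticketAttack_posSemidef (c₁ c₂ a₁ a₂ : Fin 2) :
    (ticketAttack e w σ c₁ c₂ a₁ a₂).PosSemidef := by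
  unfold ticketAttack
  split_ifs <;> exact labelledPOVM_posSemidef _ _ _ _ _

variable {e w}

theorem sum_ticketAttack (he : ∀ b, IsOrthonormal (e b)) (hw : IsOrthonormal w) (c₁ c₂ : Fin 2) :
    ∑ a₁, ∑ a₂, ticketAttack e w σ c₁ c₂ a₁ a₂ = 1 := by
  unfold ticketAttack
  split_ifs
  · rw [sum_labelledPOVM, (he c₁).sum_ketBra]
  · rw [sum_labelledPOVM, hw.sum_ketBra]

theorem sum_accept_ticketAttack (he : ∀ b, IsOrthonormal (e b)) {q : ℝ}
    (hq : ∀ b k, Complex.normSq (star (e b (σ b + k)) ⬝ᵥ w k) = q) (b t c₁ c₂ : Fin 2) :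
    ∑ a₁, ∑ a₂, (if (c₁ = b → a₁ = t) ∧ (c₂ = b → a₂ = t)
        then (star (e b t) ⬝ᵥ (ticketAttack e w σ c₁ c₂ a₁ a₂) *ᵥ e b t).re else 0) =
      if c₁ = c₂ then 1 else q := by
  unfold ticketAttack
  split_ifs with hc
  · subst hc
    rw [sum_ite_re_labelledPOVM]
    by_cases hb : c₁ = b
    · subst hb
      simp [he c₁ t]
    · simpa [hb] using (he c₁).sum_normSq ((he b).star_dotProduct_self t)
  · rw [sum_ite_re_labelledPOVM]
    obtain rfl | rfl : b = c₁ ∨ b = c₂ := by omega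
    all_goals
      simp only [hc, Ne.symm hc, forall_const, IsEmpty.forall_iff, and_true, true_and,
        ← eq_sub_iff_add_eq', Finset.sum_ite_eq', Finset.mem_univ, if_true]
      simpa using hq b (t - σ b)

end TicketAttack

/-- For two orthonormal bases `{|e_0^0⟩,|e_1^0⟩}` and `{|e_0^1⟩,|e_1^1⟩}` of `ℂ²`
with effective overlap `c = max_{s,t} |⟨e_s^0|e_t^1⟩|²`, there is a counterfeiting
strategy against the single-qubit classical-verification ticket scheme (key `(t,b)`
uniform, ticket `|e_t^b⟩`, two independent uniform challenges `c₁,c₂ ∈ {0,1}`,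
answers `(a₁,a₂)` accepted iff `a_j = t` whenever `c_j = b`), given by POVMs
`{A_{c₁c₂}^{a₁a₂}}` on `ℂ²`, achieving success probability exactly `3/4 + √c/4`. -/
theorem classical_verification_qubit_attack
    (e : Fin 2 → Fin 2 → (Fin 2 → ℂ))
    (he : ∀ b s t, star (e b s) ⬝ᵥ e b t = if s = t then 1 else 0)
    (c : ℝ)
    (hc : IsGreatest {x : ℝ | ∃ s t, x = Complex.normSq (star (e 0 s) ⬝ᵥ e 1 t)} c) :
    ∃ A : Fin 2 → Fin 2 → Fin 2 → Fin 2 → Matrix (Fin 2) (Fin 2) ℂ,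
      (∀ c₁ c₂ a₁ a₂, (A c₁ c₂ a₁ a₂).PosSemidef) ∧
      (∀ c₁ c₂, ∑ a₁, ∑ a₂, A c₁ c₂ a₁ a₂ = 1) ∧
      (1 / (2 * 2) : ℝ) * ∑ b : Fin 2, ∑ t : Fin 2,
          (1 / 4 : ℝ) * ∑ c₁ : Fin 2, ∑ c₂ : Fin 2, ∑ a₁ : Fin 2, ∑ a₂ : Fin 2,
            (if (c₁ = b → a₁ = t) ∧ (c₂ = b → a₂ = t)
              then (star (e b t) ⬝ᵥ (A c₁ c₂ a₁ a₂).mulVec (e b t)).re else 0)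
        = 3 / 4 + Real.sqrt c / 4 := by
  obtain ⟨s, t, rfl⟩ := hc.1
  have he' : ∀ b, IsOrthonormal (e b) := he
  obtain ⟨v, hv, hsv, htv⟩ :=
    exists_normSq_star_dotProduct_eq ((he' 0).star_dotProduct_self s) ((he' 1).star_dotProduct_self t)
  have hw := isOrthonormal_qubitPerp hv
  have hq : ∀ b k, Complex.normSq (star (e b (![s, t] b + k)) ⬝ᵥ ![v, qubitPerp v] k) =
      (1 + √(Complex.normSq (star (e 0 s) ⬝ᵥ e 1 t))) / 2 := by
    intro b k
    rw [hw.normSq_star_dotProduct_add (he' b)]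
    fin_cases b
    exacts [hsv, htv]
  refine ⟨ticketAttack e ![v, qubitPerp v] ![s, t], ticketAttack_posSemidef _ _ _,
    sum_ticketAttack _ he' hw, ?_⟩
  simp only [sum_accept_ticketAttack _ he' hq]
  simp [Fin.sum_univ_two]
  ring
end
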